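/- arXiv:2510.15864 — 9 statements merged into one kernel-verified Lean document; each statement's English description precedes it below -/
import Mathlib

section
/- Let G be a finite simple graph on vertex set {x_1,...,x_n} with at least one edge, and let I_c(G) be its complementary edge ideal in K[x_1,...,x_n], generated by the monomials ∏_{x_i ∉ e} x_i for edges e of G. Then I_c(G) equals the intersection of: the ideals (x) for each isolated vertex x of G, the ideals (x_i, x_j) for each edge {x_i,x_j} of the complement graph G^c, and the ideals (x_i, x_j, x_k) for each triple {x_i,x_j,x_k} inducing a triangle in G. -/
open MvPolynomial

/-- The `k`-th symbolic power of a squarefree monomial ideal: the intersection of the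
`k`-th powers of its minimal primes. -/
noncomputable def symbPow {R : Type*} [CommRing R] (I : Ideal R) (k : ℕ) : Ideal R :=
  ⨅ p ∈ I.minimalPrimes, p ^ k

/-- The complementary edge ideal of a graph `G`: generated by the monomials
`∏_{l ∉ e} X l` over edges `e` of `G`. -/
noncomputable def compIdeal {V : Type*} [Fintype V] [DecidableEq V]
    (K : Type*) [Field K] (G : SimpleGraph V) : Ideal (MvPolynomial V K) :=
  Ideal.span {m | ∃ i j, G.Adj i j ∧ m = ∏ l ∈ Finset.univ \ {i, j}, X l}

/-- A generator lies in a variable ideal as soon as some variable outside the edge is in it. -/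
lemma gen_mem_span {n : ℕ} {K : Type*} [Field K] {i j a : Fin n} (s : Set (Fin n))
    (has : a ∈ s) (ha : a ∉ ({i, j} : Finset (Fin n))) :
    (∏ l ∈ Finset.univ \ {i, j}, X l : MvPolynomial (Fin n) K) ∈
      Ideal.span (X '' s : Set (MvPolynomial (Fin n) K)) := by
  rw [← Finset.mul_prod_erase _ _ (Finset.mem_sdiff.2 ⟨Finset.mem_univ a, ha⟩)]
  exact Ideal.mul_mem_right _ _ (Ideal.subset_span ⟨a, has, rfl⟩)

lemma monomial_mem_compIdeal {n : ℕ} {K : Type*} [Field K] {G : SimpleGraph (Fin n)}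
    {i j : Fin n} (hij : G.Adj i j) (d : Fin n →₀ ℕ) (c : K)
    (hd : ∀ l, l ∉ ({i, j} : Finset (Fin n)) → d l ≠ 0) :
    (monomial d c : MvPolynomial (Fin n) K) ∈ compIdeal K G := by
  have h1 : (∏ l ∈ Finset.univ \ {i, j}, X l : MvPolynomial (Fin n) K) ∣ monomial d c := by
    have h2 : (∏ l ∈ Finset.univ \ {i, j}, X l : MvPolynomial (Fin n) K) ∣
        ∏ l ∈ Finset.univ \ {i, j}, (X l : MvPolynomial (Fin n) K) ^ d l := by
      refine Finset.prod_dvd_prod_of_dvd _ _ fun l hl => ?_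
      exact dvd_pow_self _ (hd l (Finset.mem_sdiff.1 hl).2)
    have h3 : (∏ l ∈ Finset.univ \ {i, j}, (X l : MvPolynomial (Fin n) K) ^ d l) ∣
        ∏ l ∈ Finset.univ, (X l : MvPolynomial (Fin n) K) ^ d l :=
      Finset.prod_dvd_prod_of_subset _ _ _ (Finset.sdiff_subset)
    have h4 : (∏ l ∈ Finset.univ, (X l : MvPolynomial (Fin n) K) ^ d l) = monomial d 1 := by
      rw [← prod_X_pow_eq_monomial]
      exact (Finset.prod_subset (Finset.subset_univ _) (fun x _ hx => by
        rw [Finsupp.notMem_support_iff.1 hx, pow_zero])).symm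
    have h5 : (monomial d 1 : MvPolynomial (Fin n) K) ∣ monomial d c :=
      ⟨C c, by rw [mul_comm, C_mul_monomial, mul_one]⟩
    exact (h2.trans (h3.trans (h4 ▸ h5)))
  obtain ⟨q, hq⟩ := h1
  rw [hq]
  exact Ideal.mul_mem_right _ _ (Ideal.subset_span ⟨i, j, hij, rfl⟩)

theorem stmt0 {n : ℕ} (K : Type*) [Field K] (G : SimpleGraph (Fin n))
    (h : ∃ i j, G.Adj i j) :
    compIdeal K G =
      (⨅ x ∈ {x : Fin n | ∀ y, ¬ G.Adj x y},
        Ideal.span ({X x} : Set (MvPolynomial (Fin n) K))) ⊓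
      (⨅ p ∈ {p : Fin n × Fin n | Gᶜ.Adj p.1 p.2},
        Ideal.span ({X p.1, X p.2} : Set (MvPolynomial (Fin n) K))) ⊓
      (⨅ t ∈ {t : Fin n × Fin n × Fin n |
          G.Adj t.1 t.2.1 ∧ G.Adj t.2.1 t.2.2 ∧ G.Adj t.1 t.2.2},
        Ideal.span ({X t.1, X t.2.1, X t.2.2} : Set (MvPolynomial (Fin n) K))) := by
  have himg1 : ∀ a : Fin n, ({X a} : Set (MvPolynomial (Fin n) K)) = X '' {a} := by
    intro a; rw [Set.image_singleton]
  have himg2 : ∀ a b : Fin n, ({X a, X b} : Set (MvPolynomial (Fin n) K)) = X '' {a, b} := by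
    intro a b; rw [Set.image_insert_eq, Set.image_singleton]
  have himg3 : ∀ a b c : Fin n,
      ({X a, X b, X c} : Set (MvPolynomial (Fin n) K)) = X '' {a, b, c} := by
    intro a b c; rw [Set.image_insert_eq, Set.image_insert_eq, Set.image_singleton]
  apply le_antisymm
  · refine le_inf (le_inf ?_ ?_) ?_
    · rw [compIdeal, Ideal.span_le]
      rintro m ⟨i, j, hij, rfl⟩
      simp only [SetLike.mem_coe, Ideal.mem_iInf]
      intro x hx
      rw [himg1]
      refine gen_mem_span _ rfl ?_
      simp only [Finset.mem_insert, Finset.mem_singleton]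
      rintro (rfl | rfl)
      · exact hx j hij
      · exact hx i hij.symm
    · rw [compIdeal, Ideal.span_le]
      rintro m ⟨i, j, hij, rfl⟩
      simp only [SetLike.mem_coe, Ideal.mem_iInf]
      rintro ⟨a, b⟩ hab
      simp only [Set.mem_setOf_eq, SimpleGraph.compl_adj] at hab
      rw [himg2]
      by_cases ha : a ∈ ({i, j} : Finset (Fin n))
      · refine gen_mem_span (a := b) _ (by simp) ?_
        simp only [Finset.mem_insert, Finset.mem_singleton] at ha ⊢
        rintro (rfl | rfl) <;> rcases ha with rfl | rfl
        · exact hab.1 rfl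
        · exact hab.2 hij.symm
        · exact hab.2 hij
        · exact hab.1 rfl
      · exact gen_mem_span (a := a) _ (by simp) ha
    · rw [compIdeal, Ideal.span_le]
      rintro m ⟨i, j, hij, rfl⟩
      simp only [SetLike.mem_coe, Ideal.mem_iInf]
      rintro ⟨a, b, c⟩ ⟨h1, h2, h3⟩
      rw [himg3]
      by_cases ha : a ∈ ({i, j} : Finset (Fin n))
      · by_cases hb : b ∈ ({i, j} : Finset (Fin n))
        · refine gen_mem_span (a := c) _ (by simp) ?_
          simp only [Finset.mem_insert, Finset.mem_singleton] at ha hb ⊢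
          rintro (rfl | rfl) <;> rcases ha with rfl | rfl <;> rcases hb with rfl | rfl
          · exact h1.ne rfl
          · exact h3.ne rfl
          · exact h2.ne rfl
          · exact h1.ne rfl
          · exact h1.ne rfl
          · exact h2.ne rfl
          · exact h3.ne rfl
          · exact h1.ne rfl
        · exact gen_mem_span (a := b) _ (by simp) hb
      · exact gen_mem_span (a := a) _ (by simp) ha
  · intro f hf
    simp only [Ideal.mem_inf, Ideal.mem_iInf] at hf
    obtain ⟨⟨hiso, hpair⟩, htri⟩ := hf
    -- extract monomial-level conditions
    have hiso' : ∀ x, (∀ y, ¬ G.Adj x y) → ∀ d ∈ f.support, d x ≠ 0 := by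
      intro x hx d hd
      have := (hiso x hx)
      rw [himg1, mem_ideal_span_X_image] at this
      obtain ⟨i, hi, hne⟩ := this d hd
      rw [Set.mem_singleton_iff] at hi
      subst hi; exact hne
    have hpair' : ∀ a b, Gᶜ.Adj a b → ∀ d ∈ f.support, d a ≠ 0 ∨ d b ≠ 0 := by
      intro a b hab d hd
      have := hpair (a, b) hab
      rw [himg2, mem_ideal_span_X_image] at this
      obtain ⟨i, hi, hne⟩ := this d hd
      rcases hi with rfl | hi
      · exact Or.inl hne
      · rw [Set.mem_singleton_iff] at hi; subst hi; exact Or.inr hne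
    have htri' : ∀ a b c, G.Adj a b → G.Adj b c → G.Adj a c →
        ∀ d ∈ f.support, d a ≠ 0 ∨ d b ≠ 0 ∨ d c ≠ 0 := by
      intro a b c h1 h2 h3 d hd
      have := htri (a, b, c) ⟨h1, h2, h3⟩
      rw [himg3, mem_ideal_span_X_image] at this
      obtain ⟨i, hi, hne⟩ := this d hd
      rcases hi with rfl | rfl | hi
      · exact Or.inl hne
      · exact Or.inr (Or.inl hne)
      · rw [Set.mem_singleton_iff] at hi; subst hi; exact Or.inr (Or.inr hne)
    rw [f.as_sum]
    refine Ideal.sum_mem _ fun d hd => ?_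
    -- find a suitable edge
    have hadj : ∀ a b : Fin n, a ≠ b → d a = 0 → d b = 0 → G.Adj a b := by
      intro a b hab ha hb
      by_contra hn
      rcases hpair' a b ((SimpleGraph.compl_adj G a b).2 ⟨hab, hn⟩) d hd with h' | h' <;>
        [exact h' ha; exact h' hb]
    have key : ∃ i j, G.Adj i j ∧ ∀ l, l ∉ ({i, j} : Finset (Fin n)) → d l ≠ 0 := by
      by_cases hu : ∃ u, d u = 0
      · obtain ⟨u, hu⟩ := hu
        by_cases hv : ∃ v, v ≠ u ∧ d v = 0
        · obtain ⟨v, hvu, hv⟩ := hv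
          refine ⟨u, v, hadj u v hvu.symm hu hv, fun l hl hldl => ?_⟩
          simp only [Finset.mem_insert, Finset.mem_singleton, not_or] at hl
          rcases htri' u v l (hadj u v hvu.symm hu hv) (hadj v l (Ne.symm hl.2) hv hldl)
            (hadj u l (Ne.symm hl.1) hu hldl) d hd with h' | h' | h'
          · exact h' hu
          · exact h' hv
          · exact h' hldl
        · push_neg at hv
          have : ¬ ∀ y, ¬ G.Adj u y := by
            intro hiso2
            exact hiso' u hiso2 d hd hu
          push_neg at this
          obtain ⟨y, hy⟩ := this
          refine ⟨u, y, hy, fun l hl hldl => ?_⟩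
          simp only [Finset.mem_insert, Finset.mem_singleton, not_or] at hl
          exact hv l hl.1 hldl
      · push_neg at hu
        obtain ⟨i, j, hij⟩ := h
        exact ⟨i, j, hij, fun l _ => hu l⟩
    obtain ⟨i, j, hij, hS⟩ := key
    exact monomial_mem_compIdeal hij d _ hS
end

section
/- Let G be a finite simple graph, x an isolated vertex of G, and Ĝ = G \ x the graph obtained by deleting x. Then for each positive integer k, the k-th symbolic power of I_c(G) equals the k-th ordinary power of I_c(G) if and only if the k-th symbolic power of I_c(Ĝ) equals the k-th ordinary power of I_c(Ĝ). -/
open MvPolynomial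

/-!
Renaming `x` to the last variable, `K[x_1, …, x_n, x] ≅ R[X]` with `R = K[x_1, …, x_n]`. As `x` is
isolated, every generator of `I_c(G)` is `X` times a generator of `J = I_c(Ĝ)`, so `I_c(G)`
corresponds to `(X) · J[X]`. For `J ≠ 0` the minimal primes of `(X) · J[X]` are `(X)` and the
`p[X]` with `p` minimal over `J`, whence its `k`-th symbolic power is
`(X^k) ∩ J^(k)[X] = X^k · J^(k)[X]`, while its `k`-th power is `X^k · (J^k)[X]`. Cancelling `X^k`
and using that `J ↦ J[X]` is injective gives the equivalence.
-/

section

variable {R : Type*} [CommRing R] {I J p : Ideal R}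

theorem Ideal.minimalPrimes_mul_subset :
    (I * J).minimalPrimes ⊆ I.minimalPrimes ∪ J.minimalPrimes := by
  intro q hq
  have := hq.isPrime
  rcases (Ideal.IsPrime.mul_le this).mp hq.le with hIq | hJq
  · exact Or.inl ⟨⟨this, hIq⟩, fun r ⟨hr, hIr⟩ => hq.2 ⟨hr, Ideal.mul_le_left.trans hIr⟩⟩
  · exact Or.inr ⟨⟨this, hJq⟩, fun r ⟨hr, hJr⟩ => hq.2 ⟨hr, Ideal.mul_le_right.trans hJr⟩⟩

theorem Ideal.mem_minimalPrimes_mul_of_not_le (hp : p ∈ I.minimalPrimes) (hJp : ¬ J ≤ p) :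
    p ∈ (I * J).minimalPrimes := by
  refine ⟨⟨hp.isPrime, Ideal.mul_le_left.trans hp.le⟩, fun q ⟨hq, hIJq⟩ hqp => ?_⟩
  rcases (Ideal.IsPrime.mul_le hq).mp hIJq with hIq | hJq
  · exact hp.2 ⟨hq, hIq⟩ hqp
  · exact absurd (hJq.trans hqp) hJp

theorem Ideal.minimalPrimes_mul_of_not_le (hI : ∀ p ∈ I.minimalPrimes, ¬ J ≤ p)
    (hJ : ∀ p ∈ J.minimalPrimes, ¬ I ≤ p) :
    (I * J).minimalPrimes = I.minimalPrimes ∪ J.minimalPrimes := by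
  refine Ideal.minimalPrimes_mul_subset.antisymm (Set.union_subset
    (fun p hp => Ideal.mem_minimalPrimes_mul_of_not_le hp (hI p hp)) fun p hp => ?_)
  rw [mul_comm]
  exact Ideal.mem_minimalPrimes_mul_of_not_le hp (hJ p hp)

theorem Ideal.span_singleton_inf_eq_mul {x : R} (hx : ∀ y, x * y ∈ I → y ∈ I) :
    Ideal.span {x} ⊓ I = Ideal.span {x} * I := by
  refine le_antisymm (fun z ⟨hzx, hzI⟩ => ?_) Ideal.mul_le_inf
  obtain ⟨y, rfl⟩ := Ideal.mem_span_singleton.mp hzx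
  exact Ideal.mem_span_singleton_mul.mpr ⟨y, hx y hzI, rfl⟩

end

section SymbolicPower

variable {R S : Type*} [CommRing R] [CommRing S]

theorem symbPow_eq_pow_of_isPrime (P : Ideal R) [P.IsPrime] (k : ℕ) : symbPow P k = P ^ k := by
  rw [symbPow, Ideal.minimalPrimes_eq_subsingleton_self, iInf_singleton]

theorem symbPow_mul_of_not_le {I J : Ideal R} (hI : ∀ p ∈ I.minimalPrimes, ¬ J ≤ p)
    (hJ : ∀ p ∈ J.minimalPrimes, ¬ I ≤ p) (k : ℕ) :
    symbPow (I * J) k = symbPow I k ⊓ symbPow J k := by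
  rw [symbPow, Ideal.minimalPrimes_mul_of_not_le hI hJ, iInf_union, symbPow, symbPow]

theorem Ideal.comap_pow_of_ringEquiv (e : R ≃+* S) (I : Ideal S) (k : ℕ) :
    (I ^ k).comap e = I.comap e ^ k := by
  rw [← Ideal.map_symm, ← Ideal.map_symm, Ideal.map_pow]

theorem symbPow_comap_ringEquiv (e : R ≃+* S) (I : Ideal S) (k : ℕ) :
    symbPow (I.comap e) k = (symbPow I k).comap e := by
  rw [← Ideal.comap_coe, symbPow,
    Ideal.comap_minimalPrimes_eq_of_surjective (f := (e : R →+* S)) e.surjective, symbPow]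
  simp only [iInf_image, Ideal.comap_iInf, Ideal.comap_coe, Ideal.comap_pow_of_ringEquiv]

theorem symbPow_map_ringEquiv_eq_pow_iff (e : R ≃+* S) (I : Ideal R) (k : ℕ) :
    symbPow (I.map e) k = I.map e ^ k ↔ symbPow I k = I ^ k := by
  rw [← Ideal.comap_symm, symbPow_comap_ringEquiv, ← Ideal.comap_pow_of_ringEquiv]
  exact (Ideal.comap_injective_of_surjective _ e.symm.surjective).eq_iff

end SymbolicPower

namespace Polynomial

variable {R : Type*} [CommRing R]

theorem comap_C_map_C (J : Ideal R) : (J.map (C : R →+* R[X])).comap C = J := by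
  ext r
  simp only [Ideal.mem_comap, Ideal.mem_map_C_iff, coeff_C]
  exact ⟨fun h => by simpa using h 0, fun hr n => by split_ifs <;> simp [hr]⟩

theorem map_C_injective : Function.Injective (Ideal.map (C : R →+* R[X])) :=
  Function.LeftInverse.injective comap_C_map_C

theorem map_C_iInf {ι : Sort*} (J : ι → Ideal R) :
    (⨅ i, J i).map (C : R →+* R[X]) = ⨅ i, (J i).map C := by
  ext f
  simp only [Ideal.mem_map_C_iff, Ideal.mem_iInf]
  exact forall_comm

theorem minimalPrimes_map_C (J : Ideal R) :
    (J.map (C : R →+* R[X])).minimalPrimes = Ideal.map C '' J.minimalPrimes := by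
  ext q
  constructor
  · rintro ⟨⟨hq, hJq⟩, hmin⟩
    have hp := Ideal.comap_isPrime C q
    have hq_eq : (q.comap C).map C = q :=
      Ideal.map_comap_le.antisymm (hmin ⟨inferInstance, Ideal.map_mono
        (Ideal.map_le_iff_le_comap.mp hJq)⟩ Ideal.map_comap_le)
    refine ⟨q.comap C, ⟨⟨hp, Ideal.map_le_iff_le_comap.mp hJq⟩, fun p ⟨hp', hJp⟩ hpq => ?_⟩, hq_eq⟩
    rw [← comap_C_map_C p]
    exact Ideal.comap_mono (hmin ⟨inferInstance, Ideal.map_mono hJp⟩ (hq_eq ▸ Ideal.map_mono hpq))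
  · rintro ⟨p, ⟨⟨hp, hJp⟩, hmin⟩, rfl⟩
    refine ⟨⟨inferInstance, Ideal.map_mono hJp⟩, fun q ⟨hq, hJq⟩ hqp => ?_⟩
    refine Ideal.map_le_iff_le_comap.mpr (hmin ⟨Ideal.comap_isPrime C q,
      Ideal.map_le_iff_le_comap.mp hJq⟩ ?_)
    rw [← comap_C_map_C p]
    exact Ideal.comap_mono hqp

theorem symbPow_map_C (J : Ideal R) (k : ℕ) :
    symbPow (J.map (C : R →+* R[X])) k = (symbPow J k).map C := by
  simp only [symbPow, minimalPrimes_map_C, iInf_image, map_C_iInf, Ideal.map_pow]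

theorem X_notMem_map_C {p : Ideal R} (hp : p ≠ ⊤) : (X : R[X]) ∉ p.map C := by
  rw [Ideal.mem_map_C_iff, not_forall]
  exact ⟨1, by simpa [Ideal.eq_top_iff_one] using hp⟩

theorem map_C_not_le_span_X {J : Ideal R} (hJ : J ≠ ⊥) :
    ¬ J.map (C : R →+* R[X]) ≤ Ideal.span {X} := by
  obtain ⟨a, haJ, ha⟩ := Submodule.exists_mem_ne_zero_of_ne_bot hJ
  intro h
  obtain ⟨g, hg⟩ := Ideal.mem_span_singleton'.mp (h (Ideal.mem_map_of_mem C haJ))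
  exact ha (by simpa using (congrArg (coeff · 0) hg).symm)

theorem X_pow_mul_mem_map_C {A : Ideal R} {k : ℕ} {g : R[X]} (h : X ^ k * g ∈ A.map C) :
    g ∈ A.map C := by
  rw [Ideal.mem_map_C_iff] at h ⊢
  intro n
  simpa only [coeff_X_pow_mul] using h (n + k)

variable [IsDomain R]

theorem symbPow_span_X_mul_map_C {J : Ideal R} (hJ : J ≠ ⊥) (k : ℕ) :
    symbPow (Ideal.span {X} * J.map (C : R →+* R[X])) k
      = Ideal.span {X ^ k} * (symbPow J k).map C := by
  have : (Ideal.span {(X : R[X])}).IsPrime :=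
    (Ideal.span_singleton_prime X_ne_zero).mpr prime_X
  rw [symbPow_mul_of_not_le, symbPow_eq_pow_of_isPrime, Ideal.span_singleton_pow, symbPow_map_C,
    Ideal.span_singleton_inf_eq_mul fun _ => X_pow_mul_mem_map_C]
  · rw [Ideal.minimalPrimes_eq_subsingleton_self]
    rintro p rfl
    exact map_C_not_le_span_X hJ
  · rw [minimalPrimes_map_C]
    rintro _ ⟨p, hp, rfl⟩ hXp
    exact X_notMem_map_C hp.isPrime.ne_top (hXp (Ideal.mem_span_singleton_self X))

theorem symbPow_span_X_mul_map_C_eq_pow_iff (J : Ideal R) (k : ℕ) :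
    symbPow (Ideal.span {X} * J.map (C : R →+* R[X])) k
        = (Ideal.span {X} * J.map (C : R →+* R[X])) ^ k ↔ symbPow J k = J ^ k := by
  rcases eq_or_ne J ⊥ with rfl | hJ
  · -- `⊥` is prime in a domain, so both sides hold
    simp only [Ideal.map_bot, Ideal.mul_bot, symbPow_eq_pow_of_isPrime]
  rw [symbPow_span_X_mul_map_C hJ, mul_pow, Ideal.span_singleton_pow, ← Ideal.map_pow,
    Ideal.span_singleton_mul_right_inj (pow_ne_zero k X_ne_zero), map_C_injective.eq_iff]

end Polynomial

section ComplementaryEdgeIdeal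

variable {n : ℕ} (R : Type*) [CommSemiring R]

noncomputable def lastVarEquiv (n : ℕ) (R : Type*) [CommSemiring R] :
    MvPolynomial (Fin (n + 1)) R ≃+* Polynomial (MvPolynomial (Fin n) R) :=
  ((renameEquiv R finSuccEquivLast).trans (optionEquivLeft R (Fin n))).toRingEquiv

theorem lastVarEquiv_X_last : lastVarEquiv n R (X (Fin.last n)) = Polynomial.X := by
  simp [lastVarEquiv, finSuccEquivLast_last, optionEquivLeft_X_none]

theorem lastVarEquiv_X_castSucc (i : Fin n) :
    lastVarEquiv n R (X i.castSucc) = Polynomial.C (X i) := by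
  simp [lastVarEquiv, finSuccEquivLast_castSucc, optionEquivLeft_X_some]

theorem Fin.univ_sdiff_pair_castSucc (i j : Fin n) :
    (Finset.univ \ {i.castSucc, j.castSucc} : Finset (Fin (n + 1)))
      = Finset.cons (Fin.last n) ((Finset.univ \ {i, j}).map Fin.castSuccEmb)
          (by simp [(Fin.castSucc_lt_last _).ne]) := by
  ext x
  induction x using Fin.lastCases with
  | last => simp [(Fin.castSucc_lt_last i).ne', (Fin.castSucc_lt_last j).ne']
  | cast y => simp [Fin.castSucc_inj, (Fin.castSucc_lt_last y).ne]

theorem lastVarEquiv_prod_univ_sdiff_pair (i j : Fin n) :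
    lastVarEquiv n R (∏ l ∈ Finset.univ \ {i.castSucc, j.castSucc}, X l)
      = Polynomial.X * Polynomial.C (∏ l ∈ Finset.univ \ {i, j}, X l) := by
  rw [Fin.univ_sdiff_pair_castSucc, Finset.prod_cons, Finset.prod_map, map_mul, map_prod,
    lastVarEquiv_X_last, map_prod]
  simp only [Fin.coe_castSuccEmb, lastVarEquiv_X_castSucc]

theorem map_lastVarEquiv_compIdeal (K : Type*) [Field K] (G : SimpleGraph (Fin (n + 1)))
    (hx : ∀ y, ¬ G.Adj (Fin.last n) y) (Ghat : SimpleGraph (Fin n))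
    (hGhat : ∀ i j : Fin n, Ghat.Adj i j ↔ G.Adj i.castSucc j.castSucc) :
    (compIdeal K G).map (lastVarEquiv n K)
      = Ideal.span {Polynomial.X} * (compIdeal K Ghat).map Polynomial.C := by
  rw [compIdeal, compIdeal, Ideal.map_span, Ideal.map_span, Ideal.span_mul_span']
  congr 1
  ext m
  constructor
  · rintro ⟨-, ⟨i, j, hij, rfl⟩, rfl⟩
    obtain ⟨i, rfl⟩ := Fin.exists_castSucc_eq.mpr fun h : i = _ => hx j (h ▸ hij)
    obtain ⟨j, rfl⟩ := Fin.exists_castSucc_eq.mpr fun h : j = _ => hx _ (h ▸ hij.symm)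
    rw [lastVarEquiv_prod_univ_sdiff_pair]
    exact Set.mul_mem_mul rfl ⟨_, ⟨i, j, (hGhat i j).mpr hij, rfl⟩, rfl⟩
  · rintro ⟨_, rfl, -, ⟨-, ⟨i, j, hij, rfl⟩, rfl⟩, rfl⟩
    exact ⟨_, ⟨i.castSucc, j.castSucc, (hGhat i j).mp hij, rfl⟩,
      lastVarEquiv_prod_univ_sdiff_pair K i j⟩

end ComplementaryEdgeIdeal

theorem stmt1_general {n : ℕ} (K : Type*) [Field K] (G : SimpleGraph (Fin (n + 1)))
    (hx : ∀ y, ¬ G.Adj (Fin.last n) y)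
    (Ghat : SimpleGraph (Fin n))
    (hGhat : ∀ i j : Fin n, Ghat.Adj i j ↔ G.Adj i.castSucc j.castSucc)
    (k : ℕ) :
    symbPow (compIdeal K G) k = compIdeal K G ^ k ↔
      symbPow (compIdeal K Ghat) k = compIdeal K Ghat ^ k := by
  rw [← symbPow_map_ringEquiv_eq_pow_iff (lastVarEquiv n K),
    map_lastVarEquiv_compIdeal K G hx Ghat hGhat]
  exact Polynomial.symbPow_span_X_mul_map_C_eq_pow_iff _ k

/-- If `x` (here the vertex `Fin.last n`) is an isolated vertex of `G` and `Ĝ = G \ x`,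
then `I_c(G)^(k) = I_c(G)^k` iff `I_c(Ĝ)^(k) = I_c(Ĝ)^k`. -/
theorem stmt1 {n : ℕ} (K : Type*) [Field K] (G : SimpleGraph (Fin (n + 1)))
    (hx : ∀ y, ¬ G.Adj (Fin.last n) y)
    (Ghat : SimpleGraph (Fin n))
    (hGhat : ∀ i j : Fin n, Ghat.Adj i j ↔ G.Adj i.castSucc j.castSucc)
    (k : ℕ) (hk : 0 < k) :
    symbPow (compIdeal K G) k = compIdeal K G ^ k ↔
      symbPow (compIdeal K Ghat) k = compIdeal K Ghat ^ k :=
  stmt1_general K G hx Ghat hGhat k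
end

section
/- For the star graph K_{1,3} on vertices x_1,...,x_4 with center x_1, and for every integer k ≥ 2, the monomial (x_2 x_3)^{k-1} x_4 lies in the k-th symbolic power of I_c(K_{1,3}) but not in the k-th ordinary power; in particular I_c(K_{1,3})^(k) ≠ I_c(K_{1,3})^k for all k ≥ 2. -/
open MvPolynomial

/-- The star graph `K_{1,3}` on vertices `0,1,2,3` with center `0`. -/
def starK13 : SimpleGraph (Fin 4) := SimpleGraph.fromRel (fun i _ => i = 0)

lemma gen_mem (K : Type*) [Field K] (i j : Fin 4) (h : starK13.Adj i j) :
    (∏ l ∈ Finset.univ \ {i, j}, X l : MvPolynomial (Fin 4) K) ∈ compIdeal K starK13 :=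
  Ideal.subset_span ⟨i, j, h, rfl⟩

lemma adj03 : starK13.Adj 0 3 := by
  simp [starK13, SimpleGraph.fromRel_adj]
lemma adj02 : starK13.Adj 0 2 := by
  simp [starK13, SimpleGraph.fromRel_adj]
lemma adj01 : starK13.Adj 0 1 := by
  simp [starK13, SimpleGraph.fromRel_adj]

lemma mem12 (K : Type*) [Field K] :
    (X 1 * X 2 : MvPolynomial (Fin 4) K) ∈ compIdeal K starK13 := by
  have := gen_mem K 0 3 adj03
  rwa [show (Finset.univ \ ({0, 3} : Finset (Fin 4))) = {1, 2} from by decide,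
    Finset.prod_pair (by decide)] at this

lemma mem13 (K : Type*) [Field K] :
    (X 1 * X 3 : MvPolynomial (Fin 4) K) ∈ compIdeal K starK13 := by
  have := gen_mem K 0 2 adj02
  rwa [show (Finset.univ \ ({0, 2} : Finset (Fin 4))) = {1, 3} from by decide,
    Finset.prod_pair (by decide)] at this

lemma mem23 (K : Type*) [Field K] :
    (X 2 * X 3 : MvPolynomial (Fin 4) K) ∈ compIdeal K starK13 := by
  have := gen_mem K 0 1 adj01
  rwa [show (Finset.univ \ ({0, 1} : Finset (Fin 4))) = {2, 3} from by decide,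
    Finset.prod_pair (by decide)] at this

/-- For every `k ≥ 2`, the monomial `(x₂ x₃)^{k-1} x₄` lies in `I_c(K_{1,3})^(k)` but not in
`I_c(K_{1,3})^k`; in particular the two powers differ. -/
theorem stmt3 (K : Type*) [Field K] (k : ℕ) (hk : 2 ≤ k) :
    ((X 1 * X 2 : MvPolynomial (Fin 4) K) ^ (k - 1) * X 3 ∈ symbPow (compIdeal K starK13) k) ∧
    ((X 1 * X 2 : MvPolynomial (Fin 4) K) ^ (k - 1) * X 3 ∉ compIdeal K starK13 ^ k) ∧
    symbPow (compIdeal K starK13) k ≠ compIdeal K starK13 ^ k := by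
  have hmem : (X 1 * X 2 : MvPolynomial (Fin 4) K) ^ (k - 1) * X 3
      ∈ symbPow (compIdeal K starK13) k := by
    simp only [symbPow, Ideal.mem_iInf]
    intro p hp
    have hprime : p.IsPrime := hp.1.1
    have hle : compIdeal K starK13 ≤ p := hp.1.2
    -- two of X1,X2,X3 are in p
    have h12 := hprime.mem_or_mem (hle (mem12 K))
    have h13 := hprime.mem_or_mem (hle (mem13 K))
    have h23 := hprime.mem_or_mem (hle (mem23 K))
    have case12 : X 1 ∈ p → X 2 ∈ p →
        (X 1 * X 2 : MvPolynomial (Fin 4) K) ^ (k - 1) * X 3 ∈ p ^ k := by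
      intro h1 h2
      have : (X 1 * X 2 : MvPolynomial (Fin 4) K) ^ (k - 1) ∈ (p * p) ^ (k - 1) :=
        Ideal.pow_mem_pow (Ideal.mul_mem_mul h1 h2) _
      rw [← pow_two, ← pow_mul] at this
      exact Ideal.mul_mem_right _ _ (Ideal.pow_le_pow_right (by omega) this)
    have case13 : X 1 ∈ p → X 3 ∈ p →
        (X 1 * X 2 : MvPolynomial (Fin 4) K) ^ (k - 1) * X 3 ∈ p ^ k := by
      intro h1 h3
      have key : (X 1 : MvPolynomial (Fin 4) K) ^ (k - 1) * X 3 ∈ p ^ k := by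
        have : (X 1 : MvPolynomial (Fin 4) K) ^ (k - 1) * X 3 ∈ p ^ (k - 1) * p :=
          Ideal.mul_mem_mul (Ideal.pow_mem_pow h1 _) h3
        rwa [← pow_succ, show k - 1 + 1 = k from by omega] at this
      have heq : (X 1 * X 2 : MvPolynomial (Fin 4) K) ^ (k - 1) * X 3
          = X 2 ^ (k - 1) * (X 1 ^ (k - 1) * X 3) := by ring
      rw [heq]
      exact Ideal.mul_mem_left _ _ key
    have case23 : X 2 ∈ p → X 3 ∈ p →
        (X 1 * X 2 : MvPolynomial (Fin 4) K) ^ (k - 1) * X 3 ∈ p ^ k := by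
      intro h2 h3
      have key : (X 2 : MvPolynomial (Fin 4) K) ^ (k - 1) * X 3 ∈ p ^ k := by
        have : (X 2 : MvPolynomial (Fin 4) K) ^ (k - 1) * X 3 ∈ p ^ (k - 1) * p :=
          Ideal.mul_mem_mul (Ideal.pow_mem_pow h2 _) h3
        rwa [← pow_succ, show k - 1 + 1 = k from by omega] at this
      have heq : (X 1 * X 2 : MvPolynomial (Fin 4) K) ^ (k - 1) * X 3
          = X 1 ^ (k - 1) * (X 2 ^ (k - 1) * X 3) := by ring
      rw [heq]
      exact Ideal.mul_mem_left _ _ key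
    rcases h12 with h1 | h2
    · rcases h23 with h2 | h3
      · exact case12 h1 h2
      · exact case13 h1 h3
    · rcases h13 with h1 | h3
      · exact case12 h1 h2
      · exact case23 h2 h3
  have hnotmem : (X 1 * X 2 : MvPolynomial (Fin 4) K) ^ (k - 1) * X 3
      ∉ compIdeal K starK13 ^ k := by
    intro hmem'
    set φ : MvPolynomial (Fin 4) K →ₐ[K] Polynomial K :=
      aeval (fun _ => Polynomial.X) with hφ
    have hmap : Ideal.map φ (compIdeal K starK13) ≤
        Ideal.span {(Polynomial.X : Polynomial K) ^ 2} := by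
      rw [Ideal.map_le_iff_le_comap, compIdeal, Ideal.span_le]
      rintro m ⟨i, j, hij, rfl⟩
      have hcard : (Finset.univ \ ({i, j} : Finset (Fin 4))).card = 2 := by
        rw [Finset.card_sdiff_of_subset (Finset.subset_univ _), Finset.card_univ]
        rw [Finset.card_insert_of_notMem (by simp [hij.ne]), Finset.card_singleton]
        decide
      simp only [SetLike.mem_coe, Ideal.mem_comap, map_prod, hφ, aeval_X]
      rw [Finset.prod_const, hcard]
      exact Ideal.subset_span rfl
    have himg : φ ((X 1 * X 2 : MvPolynomial (Fin 4) K) ^ (k - 1) * X 3)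
        ∈ Ideal.span {(Polynomial.X : Polynomial K) ^ 2} ^ k := by
      have : φ ((X 1 * X 2 : MvPolynomial (Fin 4) K) ^ (k - 1) * X 3)
          ∈ (Ideal.map φ (compIdeal K starK13)) ^ k := by
        rw [← Ideal.map_pow]
        exact Ideal.mem_map_of_mem _ hmem'
      exact Ideal.pow_right_mono hmap k this
    rw [Ideal.span_singleton_pow, Ideal.mem_span_singleton] at himg
    have hval : φ ((X 1 * X 2 : MvPolynomial (Fin 4) K) ^ (k - 1) * X 3)
        = Polynomial.X ^ (2 * k - 1) := by
      simp only [hφ, map_mul, map_pow, aeval_X]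
      rw [← pow_two, ← pow_mul, ← pow_succ, show 2 * (k - 1) + 1 = 2 * k - 1 from by omega]
    rw [hval, ← pow_mul] at himg
    have := Polynomial.natDegree_le_of_dvd himg (pow_ne_zero _ Polynomial.X_ne_zero)
    simp only [Polynomial.natDegree_X_pow] at this
    omega
  exact ⟨hmem, hnotmem, fun h => hnotmem (h ▸ hmem)⟩
end

section
/- Let H be a clutter on vertex set {x_1,...,x_n} and let H_{y_1...y_r} be the clutter on vertex set {x_1,...,x_n,y_1,...,y_r} whose edges are e ∪ {y_1,...,y_r} for e an edge of H. Then H satisfies the packing property if and only if H_{y_1...y_r} satisfies the packing property. -/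
/-- `T` is a vertex cover of the edge family `E`. -/
def IsCover {V : Type*} (E : Set (Finset V)) (T : Finset V) : Prop :=
  ∀ e ∈ E, ∃ v ∈ T, v ∈ e

/-- `M` is a matching of the edge family `E`: a set of pairwise disjoint edges. -/
def IsMatching {V : Type*} (E : Set (Finset V)) (M : Finset (Finset V)) : Prop :=
  ↑M ⊆ E ∧ (M : Set (Finset V)).PairwiseDisjoint id

/-- The minimum cardinality of a vertex cover of `E`. -/
noncomputable def coverNum {V : Type*} (E : Set (Finset V)) : ℕ :=
  sInf {c | ∃ T : Finset V, IsCover E T ∧ T.card = c}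

/-- The matching number of `E`. -/
noncomputable def matchNum {V : Type*} (E : Set (Finset V)) : ℕ :=
  sSup {c | ∃ M : Finset (Finset V), IsMatching E M ∧ M.card = c}

/-- The König property: minimum vertex cover size equals matching number. -/
def Konig {V : Type*} (E : Set (Finset V)) : Prop := coverNum E = matchNum E

/-- The edge family of the minor of the clutter `E` obtained by deleting the vertices of `D`
and contracting the vertices of `C`: inclusion-minimal sets among `{e \ C : e ∈ E, e ∩ D = ∅}`. -/
def minorEdges {V : Type*} [DecidableEq V] (E : Set (Finset V)) (D C : Finset V) :
    Set (Finset V) :=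
  {f | (∃ e ∈ E, (∀ v ∈ D, v ∉ e) ∧ f = e \ C) ∧
    ∀ e ∈ E, (∀ v ∈ D, v ∉ e) → ¬ e \ C ⊂ f}

/-- The packing property: every minor satisfies the König property. -/
def Packing {V : Type*} [DecidableEq V] (E : Set (Finset V)) : Prop :=
  ∀ D C : Finset V, Disjoint D C → Konig (minorEdges E D C)

section Aux

lemma konig_empty {V : Type*} : Konig (∅ : Set (Finset V)) := by
  have h1 : coverNum (∅ : Set (Finset V)) = 0 := by
    apply Nat.eq_zero_of_le_zero
    apply Nat.sInf_le
    exact ⟨∅, fun e he => absurd he (Set.notMem_empty e), rfl⟩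
  have h2 : matchNum (∅ : Set (Finset V)) = 0 := by
    have hset : {c | ∃ M : Finset (Finset V), IsMatching ∅ M ∧ M.card = c} = {0} := by
      ext c
      constructor
      · rintro ⟨M, ⟨hM, _⟩, rfl⟩
        have : M = ∅ := Finset.eq_empty_of_forall_notMem fun f hf => hM hf
        simp [this]
      · rintro rfl
        exact ⟨∅, ⟨by simp, by simp⟩, rfl⟩
    rw [matchNum, hset, csSup_singleton]
  rw [Konig, h1, h2]

lemma konig_common {V : Type*} {E : Set (Finset V)} (hne : E.Nonempty)
    {y : V} (hy : ∀ e ∈ E, y ∈ e) : Konig E := by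
  classical
  obtain ⟨e0, he0⟩ := hne
  have hub : ∀ c ∈ {c | ∃ M : Finset (Finset V), IsMatching E M ∧ M.card = c}, c ≤ 1 := by
    rintro c ⟨M, ⟨hME, hMd⟩, rfl⟩
    apply Finset.card_le_one.mpr
    intro a ha b hb
    by_contra hab
    have hd : Disjoint a b := hMd (by exact_mod_cast ha) (by exact_mod_cast hb) hab
    exact (Finset.disjoint_left.mp hd (hy a (hME ha) )) (hy b (hME hb))
  have h1 : coverNum E = 1 := by
    apply le_antisymm
    · apply Nat.sInf_le
      exact ⟨{y}, fun e he => ⟨y, Finset.mem_singleton_self y, hy e he⟩, Finset.card_singleton y⟩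
    · rw [Nat.one_le_iff_ne_zero]
      intro h0
      have hne' : {c | ∃ T : Finset V, IsCover E T ∧ T.card = c}.Nonempty :=
        ⟨1, {y}, fun e he => ⟨y, Finset.mem_singleton_self y, hy e he⟩, Finset.card_singleton y⟩
      have := Nat.sInf_mem hne'
      rw [coverNum] at h0
      rw [h0] at this
      obtain ⟨T, hT, hTc⟩ := this
      obtain ⟨v, hv, _⟩ := hT e0 he0
      rw [Finset.card_eq_zero] at hTc
      simp [hTc] at hv
  have h2 : matchNum E = 1 := by
    have hmem : (1 : ℕ) ∈ {c | ∃ M : Finset (Finset V), IsMatching E M ∧ M.card = c} := by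
      refine ⟨{e0}, ⟨by simpa using he0, ?_⟩, Finset.card_singleton e0⟩
      simp [Set.PairwiseDisjoint]
    apply le_antisymm
    · exact csSup_le ⟨1, hmem⟩ hub
    · exact le_csSup ⟨1, hub⟩ hmem
  rw [Konig, h1, h2]

variable {n r : ℕ}

/-- The embedding of edges. -/
def iotaF (g : Finset (Fin n)) : Finset (Fin n ⊕ Fin r) := g.image Sum.inl

lemma iotaF_injective : Function.Injective (iotaF (n := n) (r := r)) :=
  Finset.image_injective Sum.inl_injective

lemma cover_image_of_cover {F : Set (Finset (Fin n))} {T : Finset (Fin n)}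
    (hT : IsCover F T) :
    IsCover ((fun g => iotaF (r := r) g) '' F) (T.image Sum.inl) := by
  rintro f ⟨g, hg, rfl⟩
  obtain ⟨v, hv, hvg⟩ := hT g hg
  exact ⟨Sum.inl v, Finset.mem_image_of_mem _ hv, by simp [iotaF, hvg]⟩

lemma cover_of_cover_image {F : Set (Finset (Fin n))} {T : Finset (Fin n ⊕ Fin r)}
    (hT : IsCover ((fun g => iotaF (r := r) g) '' F) T) :
    IsCover F (T.preimage Sum.inl Sum.inl_injective.injOn) := by
  intro e he
  obtain ⟨v, hv, hve⟩ := hT (iotaF e) ⟨e, he, rfl⟩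
  simp only [iotaF, Finset.mem_image] at hve
  obtain ⟨x, hx, rfl⟩ := hve
  exact ⟨x, Finset.mem_preimage.mpr hv, hx⟩

lemma coverNum_image (F : Set (Finset (Fin n))) :
    coverNum ((fun g => iotaF (r := r) g) '' F) = coverNum F := by
  classical
  apply le_antisymm
  · by_cases hS : {c | ∃ T : Finset (Fin n), IsCover F T ∧ T.card = c}.Nonempty
    · obtain ⟨T, hT, hTc⟩ := Nat.sInf_mem hS
      calc coverNum ((fun g => iotaF (r := r) g) '' F)
          ≤ (T.image Sum.inl).card :=
            Nat.sInf_le ⟨T.image Sum.inl, cover_image_of_cover hT, rfl⟩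
        _ = coverNum F := by
            rw [Finset.card_image_of_injective _ Sum.inl_injective, hTc, coverNum]
    · have h2 : ¬ {c | ∃ T : Finset (Fin n ⊕ Fin r),
          IsCover ((fun g => iotaF (r := r) g) '' F) T ∧ T.card = c}.Nonempty := by
        rintro ⟨c, T, hT, rfl⟩
        exact hS ⟨_, _, cover_of_cover_image hT, rfl⟩
      rw [coverNum, Set.not_nonempty_iff_eq_empty.mp h2, Nat.sInf_empty]
      exact Nat.zero_le _
  · by_cases hS : {c | ∃ T : Finset (Fin n ⊕ Fin r),
        IsCover ((fun g => iotaF (r := r) g) '' F) T ∧ T.card = c}.Nonempty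
    · obtain ⟨T, hT, hTc⟩ := Nat.sInf_mem hS
      have hle : (T.preimage Sum.inl Sum.inl_injective.injOn).card ≤ T.card :=
        Finset.card_le_card_of_injOn Sum.inl (fun x hx => Finset.mem_preimage.mp hx)
          Sum.inl_injective.injOn
      calc coverNum F ≤ (T.preimage Sum.inl Sum.inl_injective.injOn).card :=
            Nat.sInf_le ⟨_, cover_of_cover_image hT, rfl⟩
        _ ≤ T.card := hle
        _ = coverNum ((fun g => iotaF (r := r) g) '' F) := hTc
    · have h2 : ¬ {c | ∃ T : Finset (Fin n), IsCover F T ∧ T.card = c}.Nonempty := by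
        rintro ⟨c, T, hT, rfl⟩
        exact hS ⟨_, _, cover_image_of_cover hT, rfl⟩
      rw [coverNum, Set.not_nonempty_iff_eq_empty.mp h2, Nat.sInf_empty]
      exact Nat.zero_le _

lemma preimage_iotaF (g : Finset (Fin n)) :
    (iotaF (r := r) g).preimage Sum.inl Sum.inl_injective.injOn = g := by
  ext x
  simp [iotaF, Finset.mem_preimage]

lemma matchNum_image (F : Set (Finset (Fin n))) :
    matchNum ((fun g => iotaF (r := r) g) '' F) = matchNum F := by
  have hset : {c | ∃ M : Finset (Finset (Fin n ⊕ Fin r)),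
      IsMatching ((fun g => iotaF (r := r) g) '' F) M ∧ M.card = c}
      = {c | ∃ M : Finset (Finset (Fin n)), IsMatching F M ∧ M.card = c} := by
    ext c
    constructor
    · rintro ⟨M, ⟨hME, hMd⟩, rfl⟩
      classical
      refine ⟨M.image (fun f => f.preimage Sum.inl Sum.inl_injective.injOn), ⟨?_, ?_⟩, ?_⟩
      · rintro g hg
        simp only [Finset.coe_image, Set.mem_image, Finset.mem_coe] at hg
        obtain ⟨f, hf, rfl⟩ := hg
        obtain ⟨g', hg', rfl⟩ := hME hf
        rw [preimage_iotaF]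
        exact hg'
      · rintro a ha b hb hab
        simp only [Finset.coe_image, Set.mem_image, Finset.mem_coe] at ha hb
        obtain ⟨fa, hfa, rfl⟩ := ha
        obtain ⟨fb, hfb, rfl⟩ := hb
        have hfab : fa ≠ fb := fun h => hab (by rw [h])
        have hd : Disjoint fa fb := hMd (by exact_mod_cast hfa) (by exact_mod_cast hfb) hfab
        simp only [Function.onFun, id]
        rw [Finset.disjoint_left]
        intro x hx hx'
        rw [Finset.mem_preimage] at hx hx'
        exact Finset.disjoint_left.mp hd hx hx'
      · rw [Finset.card_image_of_injOn]
        intro fa hfa fb hfb hab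
        obtain ⟨ga, hga, rfl⟩ := hME (by exact_mod_cast hfa)
        obtain ⟨gb, hgb, rfl⟩ := hME (by exact_mod_cast hfb)
        dsimp only at hab ⊢
        rw [preimage_iotaF, preimage_iotaF] at hab
        rw [hab]
    · rintro ⟨M, ⟨hME, hMd⟩, rfl⟩
      classical
      refine ⟨M.image (fun g => iotaF (r := r) g), ⟨?_, ?_⟩, ?_⟩
      · rintro f hf
        simp only [Finset.coe_image, Set.mem_image, Finset.mem_coe] at hf
        obtain ⟨g, hg, rfl⟩ := hf
        exact ⟨g, hME hg, rfl⟩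
      · rintro a ha b hb hab
        simp only [Finset.coe_image, Set.mem_image, Finset.mem_coe] at ha hb
        obtain ⟨ga, hga, rfl⟩ := ha
        obtain ⟨gb, hgb, rfl⟩ := hb
        have hgab : ga ≠ gb := fun h => hab (by rw [h])
        have hd : Disjoint ga gb := hMd (by exact_mod_cast hga) (by exact_mod_cast hgb) hgab
        simp only [Function.onFun, id, iotaF]
        rw [Finset.disjoint_left]
        rintro x hx hx'
        simp only [Finset.mem_image] at hx hx'
        obtain ⟨u, hu, rfl⟩ := hx
        obtain ⟨w, hw, hwu⟩ := hx'
        cases Sum.inl_injective hwu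
        exact Finset.disjoint_left.mp hd hu hw
      · exact Finset.card_image_of_injective _ iotaF_injective
  rw [matchNum, matchNum, hset]

lemma konig_image_iff (F : Set (Finset (Fin n))) :
    Konig ((fun g => iotaF (r := r) g) '' F) ↔ Konig F := by
  rw [Konig, Konig, coverNum_image, matchNum_image]

/-- The set of new vertices. -/
def Yset (n r : ℕ) : Finset (Fin n ⊕ Fin r) := Finset.univ.image Sum.inr

lemma iota_union_sdiff (e : Finset (Fin n)) (C : Finset (Fin n ⊕ Fin r)) :
    (iotaF e ∪ Yset n r) \ C =
      iotaF (e \ C.preimage Sum.inl Sum.inl_injective.injOn) ∪ (Yset n r \ C) := by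
  ext v
  rcases v with x | j <;>
    simp [iotaF, Yset, Finset.mem_preimage, Finset.mem_sdiff, and_comm]

lemma avoid_iff {D : Finset (Fin n ⊕ Fin r)} (hD : ∀ j : Fin r, Sum.inr j ∉ D)
    (e : Finset (Fin n)) :
    (∀ v ∈ D, v ∉ iotaF e ∪ Yset n r) ↔
      (∀ x ∈ D.preimage Sum.inl Sum.inl_injective.injOn, x ∉ e) := by
  constructor
  · intro h x hx hxe
    exact h (Sum.inl x) (Finset.mem_preimage.mp hx)
      (by simp [iotaF, Yset, hxe])
  · intro h v hv hv'
    rcases v with x | j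
    · rcases Finset.mem_union.mp hv' with h1 | h2
      · exact h x (Finset.mem_preimage.mpr hv) (by simpa [iotaF] using h1)
      · simp [Yset] at h2
    · exact hD j hv

lemma subset_iff {C : Finset (Fin n ⊕ Fin r)} (a b : Finset (Fin n)) :
    iotaF a ∪ (Yset n r \ C) ⊆ iotaF b ∪ (Yset n r \ C) ↔ a ⊆ b := by
  constructor
  · intro h x hx
    have : (Sum.inl x : Fin n ⊕ Fin r) ∈ iotaF b ∪ (Yset n r \ C) :=
      h (Finset.mem_union_left _ (by simp [iotaF, hx]))
    rcases Finset.mem_union.mp this with h1 | h2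
    · simpa [iotaF] using h1
    · simp [Yset] at h2
  · intro h v hv
    rcases Finset.mem_union.mp hv with h1 | h2
    · apply Finset.mem_union_left
      simp only [iotaF, Finset.mem_image] at h1 ⊢
      obtain ⟨x, hx, rfl⟩ := h1
      exact ⟨x, h hx, rfl⟩
    · exact Finset.mem_union_right _ h2

lemma ssubset_iff {C : Finset (Fin n ⊕ Fin r)} (a b : Finset (Fin n)) :
    iotaF a ∪ (Yset n r \ C) ⊂ iotaF b ∪ (Yset n r \ C) ↔ a ⊂ b := by
  rw [Finset.ssubset_iff_subset_ne, Finset.ssubset_iff_subset_ne, subset_iff]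
  constructor
  · rintro ⟨h1, h2⟩
    refine ⟨h1, fun h => h2 (by rw [h])⟩
  · rintro ⟨h1, h2⟩
    refine ⟨h1, fun h => ?_⟩
    apply h2
    apply subset_antisymm h1
    rw [← subset_iff (C := C)]
    rw [h]

lemma minor_image (E : Set (Finset (Fin n))) (D C : Finset (Fin n ⊕ Fin r))
    (hD : ∀ j : Fin r, Sum.inr j ∉ D) :
    minorEdges {f : Finset (Fin n ⊕ Fin r) | ∃ e ∈ E, f = iotaF e ∪ Yset n r} D C =
      (fun g => iotaF g ∪ (Yset n r \ C)) ''
        minorEdges E (D.preimage Sum.inl Sum.inl_injective.injOn)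
          (C.preimage Sum.inl Sum.inl_injective.injOn) := by
  set D₀ := D.preimage Sum.inl Sum.inl_injective.injOn with hD₀
  set C₀ := C.preimage Sum.inl Sum.inl_injective.injOn with hC₀
  ext f
  constructor
  · rintro ⟨⟨e', ⟨e, he, rfl⟩, hav, rfl⟩, hmin⟩
    refine ⟨e \ C₀, ⟨⟨e, he, (avoid_iff hD e).mp hav, rfl⟩, ?_⟩, (iota_union_sdiff e C).symm ▸ rfl⟩
    · intro e₂ he₂ hav₂ hss
      apply hmin (iotaF e₂ ∪ Yset n r) ⟨e₂, he₂, rfl⟩ ((avoid_iff hD e₂).mpr hav₂)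
      rw [iota_union_sdiff e₂ C, iota_union_sdiff e C]
      exact (ssubset_iff _ _).mpr hss
  · rintro ⟨g, ⟨⟨e, he, hav, rfl⟩, hmin⟩, rfl⟩
    refine ⟨⟨iotaF e ∪ Yset n r, ⟨e, he, rfl⟩, (avoid_iff hD e).mpr hav, (iota_union_sdiff e C).symm ▸ rfl⟩, ?_⟩
    rintro e₂' ⟨e₂, he₂, rfl⟩ hav₂ hss
    rw [iota_union_sdiff e₂ C] at hss
    exact hmin e₂ he₂ ((avoid_iff hD e₂).mp hav₂) ((ssubset_iff _ _).mp hss)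

end Aux


/-- A clutter `H` on `{x₁,…,xₙ}` has the packing property iff the clutter obtained by
adjoining `r` new vertices `y₁,…,y_r` to every edge has the packing property. -/
theorem stmt10 {n r : ℕ} (E : Set (Finset (Fin n)))
    (hE : IsAntichain (· ⊆ ·) E) :
    Packing E ↔
      Packing {f : Finset (Fin n ⊕ Fin r) |
        ∃ e ∈ E, f = e.image Sum.inl ∪ Finset.univ.image Sum.inr} := by
  have hE' : {f : Finset (Fin n ⊕ Fin r) |
      ∃ e ∈ E, f = e.image Sum.inl ∪ Finset.univ.image Sum.inr}
      = {f : Finset (Fin n ⊕ Fin r) | ∃ e ∈ E, f = iotaF e ∪ Yset n r} := rfl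
  rw [hE']
  constructor
  · -- forward
    intro hP D C hDC
    by_cases hDY : ∃ j : Fin r, Sum.inr j ∈ D
    · obtain ⟨j, hj⟩ := hDY
      have : minorEdges {f : Finset (Fin n ⊕ Fin r) | ∃ e ∈ E, f = iotaF e ∪ Yset n r} D C
          = ∅ := by
        ext f
        simp only [Set.mem_empty_iff_false, iff_false]
        rintro ⟨⟨e', ⟨e, he, rfl⟩, hav, rfl⟩, -⟩
        exact hav (Sum.inr j) hj (Finset.mem_union_right _ (by simp [Yset]))
      rw [this]
      exact konig_empty
    · push_neg at hDY
      by_cases hYC : (Yset n r \ C).Nonempty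
      · obtain ⟨y, hy⟩ := hYC
        set F := minorEdges {f : Finset (Fin n ⊕ Fin r) | ∃ e ∈ E, f = iotaF e ∪ Yset n r} D C
          with hF
        have hyF : ∀ f ∈ F, y ∈ f := by
          rintro f ⟨⟨e', ⟨e, he, rfl⟩, hav, rfl⟩, -⟩
          rw [Finset.mem_sdiff] at hy
          exact Finset.mem_sdiff.mpr
            ⟨Finset.mem_union_right _ hy.1, hy.2⟩
        rcases Set.eq_empty_or_nonempty F with hFe | hFne
        · rw [hFe]; exact konig_empty
        · exact konig_common hFne hyF
      · rw [Finset.not_nonempty_iff_eq_empty] at hYC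
        rw [minor_image E D C hDY]
        have hrw : (fun g => iotaF g ∪ (Yset n r \ C)) = fun g => iotaF (n := n) (r := r) g := by
          funext g
          rw [hYC, Finset.union_empty]
        rw [hrw, konig_image_iff]
        apply hP
        rw [Finset.disjoint_left]
        intro x hx hx'
        rw [Finset.mem_preimage] at hx hx'
        exact Finset.disjoint_left.mp hDC hx hx'
  · -- backward
    intro hP D C hDC
    have key := hP (D.image Sum.inl) (C.image Sum.inl ∪ Yset n r) ?_
    · have hD' : ∀ j : Fin r, Sum.inr j ∉ (D.image Sum.inl : Finset (Fin n ⊕ Fin r)) := by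
        intro j hj
        simp at hj
      rw [minor_image E (D.image Sum.inl) (C.image Sum.inl ∪ Yset n r) hD'] at key
      have h1 : ((D.image Sum.inl : Finset (Fin n ⊕ Fin r))).preimage Sum.inl Sum.inl_injective.injOn = D := by
        ext x; simp [Finset.mem_preimage]
      have h2 : (C.image Sum.inl ∪ Yset n r).preimage Sum.inl Sum.inl_injective.injOn = C := by
        ext x; simp [Finset.mem_preimage, Yset]
      have h3 : Yset n r \ (C.image Sum.inl ∪ Yset n r) = ∅ := by
        apply Finset.sdiff_eq_empty_iff_subset.mpr
        exact Finset.subset_union_right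
      rw [h1, h2, h3] at key
      have hrw : (fun g => iotaF g ∪ (∅ : Finset (Fin n ⊕ Fin r)))
          = fun g => iotaF (n := n) (r := r) g := by
        funext g; rw [Finset.union_empty]
      rw [hrw, konig_image_iff] at key
      exact key
    · rw [Finset.disjoint_left]
      rintro v hv hv'
      simp only [Finset.mem_image] at hv
      obtain ⟨x, hx, rfl⟩ := hv
      rcases Finset.mem_union.mp hv' with h1 | h2
      · simp only [Finset.mem_image] at h1
        obtain ⟨x', hx', hxx⟩ := h1
        cases Sum.inl_injective hxx
        exact Finset.disjoint_left.mp hDC hx hx'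
      · simp [Yset] at h2
end

section
/- Let G be a star graph on vertex set {x_1,...,x_n} with n ≥ 5, center x_1 and edges {x_1,x_i} for 2 ≤ i ≤ n. Then I_c(G) equals the intersection over all pairs 2 ≤ r < s ≤ n of the prime ideals (x_r, x_s), and the product x_2 x_3 ⋯ x_n lies in the second symbolic power I_c(G)^(2). -/
open MvPolynomial

/-!
Both sides of the equality are monomial ideals, so membership can be tested monomial by monomial.
A monomial lies in `I_c(G)` iff its set of absent variables is contained in an edge, and in
`⋂ (x_r, x_s)` iff no two distinct non-central variables are absent; for a star (with at least
one leaf) these conditions coincide. For the symbolic power, a prime containing a finite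
intersection of ideals contains one of them, so each minimal prime of `I_c(G)` contains some
`(x_r, x_s)`, whose square contains `x_r x_s`, a divisor of `x_2 ⋯ x_n`.
-/

theorem Ideal.IsPrime.exists_le_of_biInf_le {R ι : Type*} [CommRing R] {s : Set ι}
    (hs : s.Finite) {f : ι → Ideal R} {P : Ideal R} (hP : P.IsPrime)
    (h : ⨅ i ∈ s, f i ≤ P) :
    ∃ i ∈ s, f i ≤ P := by
  have h' : hs.toFinset.inf f ≤ P := by simpa [Finset.inf_eq_iInf] using h
  simpa using hP.inf_le'.mp h'

theorem mem_symbPow_biInf_of_mem_pow {R ι : Type*} [CommRing R] {s : Set ι} (hs : s.Finite)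
    {f : ι → Ideal R} {k : ℕ} {x : R} (hx : ∀ i ∈ s, x ∈ f i ^ k) :
    x ∈ symbPow (⨅ i ∈ s, f i) k := by
  simp only [symbPow, Submodule.mem_iInf]
  intro Q hQ
  obtain ⟨i, hi, hle⟩ := hQ.1.1.exists_le_of_biInf_le hs hQ.1.2
  exact Ideal.pow_right_mono hle k (hx i hi)

theorem Finset.prod_mem_span_pair_sq {R ι : Type*} [CommRing R] {t : Finset ι} (f : ι → R)
    {r s : ι} (hr : r ∈ t) (hs : s ∈ t) (hrs : r ≠ s) :
    ∏ l ∈ t, f l ∈ Ideal.span {f r, f s} ^ 2 := by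
  classical
  have hdvd : f r * f s ∣ ∏ l ∈ t, f l := by
    rw [← Finset.prod_pair hrs]
    exact Finset.prod_dvd_prod_of_subset _ _ _ (Finset.insert_subset hr (by simpa))
  obtain ⟨c, hc⟩ := hdvd
  rw [hc, sq]
  exact Ideal.mul_mem_right _ _ (Ideal.mul_mem_mul (Ideal.subset_span (by simp))
    (Ideal.subset_span (by simp)))

namespace MvPolynomial

variable {σ R : Type*} [CommSemiring R]

theorem prod_X_eq_monomial (s : Finset σ) :
    ∏ l ∈ s, (X l : MvPolynomial σ R) = monomial (∑ l ∈ s, Finsupp.single l 1) 1 :=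
  (monomial_sum_one s _).symm

theorem mem_ideal_span_prod_X_image {x : MvPolynomial σ R} {𝒮 : Set (Finset σ)} :
    x ∈ Ideal.span ((fun s => ∏ l ∈ s, X l) '' 𝒮) ↔
      ∀ m ∈ x.support, ∃ s ∈ 𝒮, ∀ l ∈ s, m l ≠ 0 := by
  classical
  have := mem_ideal_span_monomial_image (x := x)
    (s := (fun s : Finset σ => ∑ l ∈ s, Finsupp.single l 1) '' 𝒮)
  simp only [Set.image_image, ← prod_X_eq_monomial] at this
  rw [this]
  refine forall₂_congr fun m _ =>
    Set.exists_mem_image.trans (exists_congr fun s => and_congr_right fun _ => ?_)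
  simp only [Finsupp.le_def, Finset.sum_apply', Finsupp.single_apply, Finset.sum_ite_eq']
  exact forall_congr' fun l => by by_cases hl : l ∈ s <;> simp [hl, Nat.one_le_iff_ne_zero]

theorem mem_biInf_span_X_pair_iff {x : MvPolynomial σ R} {S : Set (σ × σ)} :
    x ∈ ⨅ p ∈ S, Ideal.span {X p.1, X p.2} ↔
      ∀ m ∈ x.support, ∀ p ∈ S, m p.1 ≠ 0 ∨ m p.2 ≠ 0 := by
  simp only [Submodule.mem_iInf, ← Set.image_pair, mem_ideal_span_X_image,
    Set.mem_insert_iff, Set.mem_singleton_iff, exists_eq_or_imp, exists_eq_left]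
  exact forall₂_comm

end MvPolynomial

theorem mem_compIdeal_iff {V K : Type*} [Fintype V] [DecidableEq V] [Field K]
    {G : SimpleGraph V} {x : MvPolynomial V K} :
    x ∈ compIdeal K G ↔
      ∀ m ∈ x.support, ∃ i j, G.Adj i j ∧ ∀ l, m l = 0 → l = i ∨ l = j := by
  have hgen : {m | ∃ i j, G.Adj i j ∧ m = ∏ l ∈ Finset.univ \ {i, j}, X l} =
      (fun s => ∏ l ∈ s, (X l : MvPolynomial V K)) ''
        {s | ∃ i j, G.Adj i j ∧ s = Finset.univ \ {i, j}} := by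
    ext m
    simp [eq_comm]
  rw [compIdeal, hgen, MvPolynomial.mem_ideal_span_prod_X_image]
  refine forall₂_congr fun m _ => ?_
  simp only [Set.mem_ofPred_eq, ↓existsAndEq, and_true, Finset.mem_sdiff, Finset.mem_univ,
    Finset.mem_insert, Finset.mem_singleton, true_and]
  exact exists₂_congr fun i j => and_congr_right fun _ => forall_congr' fun l => by tauto

theorem exists_star_edge_covering_zeros_iff {V : Type*} {z a : V} (ha : a ≠ z) (m : V → ℕ) :
    (∃ i j, (i ≠ j ∧ (i = z ∨ j = z)) ∧ ∀ l, m l = 0 → l = i ∨ l = j) ↔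
      ∀ p : V × V, p.1 ≠ z ∧ p.2 ≠ z ∧ p.1 ≠ p.2 → m p.1 ≠ 0 ∨ m p.2 ≠ 0 := by
  constructor
  · rintro ⟨i, j, hij, hm⟩ ⟨r, s⟩ ⟨hr, hs, hrs⟩
    by_contra! h
    grind [hm r h.1, hm s h.2]
  · intro h
    by_cases hzero : ∃ b, b ≠ z ∧ m b = 0
    · obtain ⟨b, hb, hmb⟩ := hzero
      refine ⟨z, b, ⟨hb.symm, Or.inl rfl⟩, fun l hl => ?_⟩
      by_contra! hlb
      simpa [hl, hmb] using h (l, b) ⟨hlb.1, hb, hlb.2⟩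
    · exact ⟨z, a, ⟨ha.symm, Or.inl rfl⟩,
        fun l hl => Or.inl (by_contra fun hlz => hzero ⟨l, hlz, hl⟩)⟩

theorem stmt11_general {n : ℕ} (hn : 5 ≤ n) (K : Type*) [Field K]
    (z : Fin n)
    (G : SimpleGraph (Fin n))
    (hG : ∀ i j, G.Adj i j ↔ i ≠ j ∧ (i = z ∨ j = z)) :
    (compIdeal K G =
      ⨅ p ∈ {p : Fin n × Fin n | p.1 ≠ z ∧ p.2 ≠ z ∧ p.1 ≠ p.2},
        Ideal.span ({X p.1, X p.2} : Set (MvPolynomial (Fin n) K))) ∧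
    (∏ i ∈ Finset.univ.erase z, (X i : MvPolynomial (Fin n) K)) ∈
      symbPow (compIdeal K G) 2 := by
  have hI : compIdeal K G =
      ⨅ p ∈ {p : Fin n × Fin n | p.1 ≠ z ∧ p.2 ≠ z ∧ p.1 ≠ p.2},
        Ideal.span ({X p.1, X p.2} : Set (MvPolynomial (Fin n) K)) := by
    have : Nontrivial (Fin n) := Fin.nontrivial_iff_two_le.mpr (by omega)
    obtain ⟨a, ha⟩ := exists_ne z
    ext x
    rw [mem_compIdeal_iff, MvPolynomial.mem_biInf_span_X_pair_iff]
    refine forall₂_congr fun m _ => ?_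
    simp only [hG]
    exact exists_star_edge_covering_zeros_iff ha m
  refine ⟨hI, ?_⟩
  rw [hI]
  exact mem_symbPow_biInf_of_mem_pow (Set.toFinite _) fun p ⟨h1, h2, h12⟩ =>
    Finset.prod_mem_span_pair_sq X (by simpa) (by simpa) h12

/-- For the star graph on `n ≥ 5` vertices with center `z`, the complementary edge ideal is
the intersection of the primes `(x_r, x_s)` over pairs of non-central vertices, and the
product of all non-central variables lies in the second symbolic power. -/
theorem stmt11 {n : ℕ} (hn : 5 ≤ n) (K : Type*) [Field K]
    (z : Fin n) (hz : (z : ℕ) = 0)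
    (G : SimpleGraph (Fin n))
    (hG : ∀ i j, G.Adj i j ↔ i ≠ j ∧ (i = z ∨ j = z)) :
    (compIdeal K G =
      ⨅ p ∈ {p : Fin n × Fin n | p.1 ≠ z ∧ p.2 ≠ z ∧ p.1 ≠ p.2},
        Ideal.span ({X p.1, X p.2} : Set (MvPolynomial (Fin n) K))) ∧
    (∏ i ∈ Finset.univ.erase z, (X i : MvPolynomial (Fin n) K)) ∈
      symbPow (compIdeal K G) 2 :=
  stmt11_general hn K z G hG
end

section
/- Let G be a star graph on {x_1,...,x_n} with n ≥ 5 (center x_1, edges {x_1,x_i} for i ≥ 2). Then for every k ≥ 2, I_c(G)^(k) ≠ I_c(G)^k. Specifically, for any edge e of G, the monomial (∏_{x_j ∉ e} x_j)^{k-2} · (x_2 x_3 ⋯ x_n) has degree (n-2)(k-2) + n - 1 < k(n-2), lies in I_c(G)^(k), but cannot lie in I_c(G)^k since every monomial in I_c(G)^k has degree at least k(n-2). -/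
open MvPolynomial

/-!
Every prime containing `I_c(G)` contains, for each edge `{z, i}` of the star, a variable `x_r`
with `r ∉ {z, i}`; applying this twice yields two distinct leaves `x_r, x_s ∈ p`, so the product
of all leaves lies in `p²`, and together with one generator to the power `k - 2` the witness lies
in `p^k` for every minimal prime `p`. On the other hand, collapsing all variables to a single
one maps `I_c(G)` into `(t^(n-2))`, hence `I_c(G)^k` into `(t^(k(n-2)))`, while the witness
maps to `t^d` with `d = (n-2)(k-2) + n - 1 < k(n-2)`.
-/

open Finset

theorem sub_two_mul_sub_two_add_sub_one_lt {n k : ℕ} (hn : 4 ≤ n) (hk : 2 ≤ k) :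
    (n - 2) * (k - 2) + n - 1 < k * (n - 2) := by
  obtain ⟨k, rfl⟩ := Nat.exists_eq_add_of_le' hk
  obtain ⟨n, rfl⟩ := Nat.exists_eq_add_of_le' hn
  simp only [Nat.add_sub_cancel, show n + 4 - 2 = n + 2 by omega]
  ring_nf
  omega

theorem Ideal.prod_mem_sq {ι R : Type*} [CommSemiring R] {p : Ideal R} {t : Finset ι}
    {f : ι → R} {r s : ι} (hr : r ∈ t) (hs : s ∈ t) (hrs : r ≠ s) (hfr : f r ∈ p)
    (hfs : f s ∈ p) : ∏ i ∈ t, f i ∈ p ^ 2 := by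
  classical
  rw [← mul_prod_erase t f hr, ← mul_prod_erase _ f (mem_erase.2 ⟨hrs.symm, hs⟩), ← mul_assoc,
    sq]
  exact Ideal.mul_mem_right _ _ (Ideal.mul_mem_mul hfr hfs)

namespace MvPolynomial

variable {σ R : Type*}

theorem aeval_X_prod_X_pow_mul_prod_X [CommSemiring R] (s t : Finset σ) (m : ℕ) :
    aeval (fun _ : σ => (Polynomial.X : Polynomial R))
        ((∏ i ∈ s, X i : MvPolynomial σ R) ^ m * ∏ i ∈ t, X i) =
      Polynomial.X ^ (#s * m + #t) := by
  simp [map_prod, pow_add, pow_mul]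

theorem totalDegree_prod_X_pow_mul_prod_X [CommSemiring R] [Nontrivial R] (s t : Finset σ)
    (m : ℕ) : ((∏ i ∈ s, X i : MvPolynomial σ R) ^ m * ∏ i ∈ t, X i).totalDegree =
      #s * m + #t := by
  have hprod (u : Finset σ) : (∏ i ∈ u, X i : MvPolynomial σ R).IsHomogeneous #u := by
    simpa using IsHomogeneous.prod u _ _ fun i _ => isHomogeneous_X R i
  refine (((hprod s).pow m).mul (hprod t)).totalDegree fun h => ?_
  have := aeval_X_prod_X_pow_mul_prod_X (R := R) s t m
  rw [h, map_zero] at this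
  exact (Polynomial.monic_X_pow _).ne_zero this.symm

end MvPolynomial

open MvPolynomial

section compIdeal

variable {V : Type*} [Fintype V] [DecidableEq V] {K : Type*} [Field K] {G : SimpleGraph V}

theorem SimpleGraph.card_compl_pair_of_adj {a b : V} (hab : G.Adj a b) :
    #(univ \ {a, b}) = Fintype.card V - 2 := by
  rw [card_sdiff_of_subset (subset_univ _), card_univ, card_pair (G.ne_of_adj hab)]

theorem exists_X_mem_of_compIdeal_le {p : Ideal (MvPolynomial V K)} [p.IsPrime]
    (hp : compIdeal K G ≤ p) {i j : V} (hij : G.Adj i j) : ∃ r, r ≠ i ∧ r ≠ j ∧ X r ∈ p := by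
  obtain ⟨r, hr, hXr⟩ := Ideal.IsPrime.prod_mem_iff.1 (hp (Ideal.subset_span ⟨i, j, hij, rfl⟩))
  simp only [mem_sdiff, mem_univ, mem_insert, mem_singleton, true_and, not_or] at hr
  exact ⟨r, hr.1, hr.2, hXr⟩

theorem prod_X_erase_mem_sq_of_compIdeal_le [Nontrivial V] {z : V}
    (hstar : ∀ i, i ≠ z → G.Adj z i) {p : Ideal (MvPolynomial V K)} [p.IsPrime]
    (hp : compIdeal K G ≤ p) : ∏ i ∈ univ.erase z, X i ∈ p ^ 2 := by
  obtain ⟨i, hi⟩ := exists_ne z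
  obtain ⟨r, hrz, -, hXr⟩ := exists_X_mem_of_compIdeal_le hp (hstar i hi)
  obtain ⟨s, hsz, hsr, hXs⟩ := exists_X_mem_of_compIdeal_le hp (hstar r hrz)
  exact Ideal.prod_mem_sq (by simpa) (by simpa) hsr.symm hXr hXs

theorem mem_symbPow_compIdeal [Nontrivial V] {z : V} (hstar : ∀ i, i ≠ z → G.Adj z i)
    {a b : V} (hab : G.Adj a b) {k : ℕ} (hk : 2 ≤ k) :
    (∏ l ∈ univ \ {a, b}, (X l : MvPolynomial V K)) ^ (k - 2) * ∏ i ∈ univ.erase z, X i ∈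
      symbPow (compIdeal K G) k := by
  simp only [symbPow, Ideal.mem_iInf]
  rintro p ⟨⟨hprime, hp⟩, -⟩
  have hedge : ∏ l ∈ univ \ {a, b}, (X l : MvPolynomial V K) ∈ p :=
    hp (Ideal.subset_span ⟨a, b, hab, rfl⟩)
  rw [← Nat.sub_add_cancel hk, pow_add]
  exact Ideal.mul_mem_mul (Ideal.pow_mem_pow hedge _)
    (prod_X_erase_mem_sq_of_compIdeal_le hstar hp)

theorem map_compIdeal_le_span_X_pow :
    (compIdeal K G).map (aeval fun _ : V => (Polynomial.X : Polynomial K)) ≤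
      Ideal.span {Polynomial.X ^ (Fintype.card V - 2)} := by
  rw [compIdeal, Ideal.map_span, Ideal.span_le]
  rintro _ ⟨_, ⟨i, j, hij, rfl⟩, rfl⟩
  simp [← G.card_compl_pair_of_adj hij, map_prod]

theorem prod_X_pow_mul_prod_X_notMem_compIdeal_pow {s t : Finset V} {m k : ℕ}
    (hlt : #s * m + #t < k * (Fintype.card V - 2)) :
    (∏ i ∈ s, (X i : MvPolynomial V K)) ^ m * ∏ i ∈ t, X i ∉ compIdeal K G ^ k := by
  intro hmem
  have hmap := Ideal.mem_map_of_mem (aeval fun _ : V => (Polynomial.X : Polynomial K)) hmem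
  rw [Ideal.map_pow] at hmap
  replace hmap := Ideal.pow_right_mono map_compIdeal_le_span_X_pow k hmap
  rw [aeval_X_prod_X_pow_mul_prod_X, Ideal.span_singleton_pow, Ideal.mem_span_singleton,
    ← pow_mul, pow_dvd_pow_iff Polynomial.X_ne_zero Polynomial.not_isUnit_X] at hmap
  linarith

end compIdeal

theorem stmt12_general {n : ℕ} (hn : 5 ≤ n) (K : Type*) [Field K]
    (z : Fin n)
    (G : SimpleGraph (Fin n))
    (hG : ∀ i j, G.Adj i j ↔ i ≠ j ∧ (i = z ∨ j = z))
    (k : ℕ) (hk : 2 ≤ k) :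
    (∀ a b : Fin n, G.Adj a b →
      ((∏ l ∈ Finset.univ \ {a, b}, (X l : MvPolynomial (Fin n) K)) ^ (k - 2) *
          ∏ i ∈ Finset.univ.erase z, X i).totalDegree = (n - 2) * (k - 2) + n - 1 ∧
      (n - 2) * (k - 2) + n - 1 < k * (n - 2) ∧
      ((∏ l ∈ Finset.univ \ {a, b}, (X l : MvPolynomial (Fin n) K)) ^ (k - 2) *
          ∏ i ∈ Finset.univ.erase z, X i) ∈ symbPow (compIdeal K G) k ∧
      ((∏ l ∈ Finset.univ \ {a, b}, (X l : MvPolynomial (Fin n) K)) ^ (k - 2) *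
          ∏ i ∈ Finset.univ.erase z, X i) ∉ compIdeal K G ^ k) ∧
    symbPow (compIdeal K G) k ≠ compIdeal K G ^ k := by
  have : Nontrivial (Fin n) := Fin.nontrivial_iff_two_le.2 (by omega)
  have hstar (i : Fin n) (hi : i ≠ z) : G.Adj z i := (hG z i).2 ⟨hi.symm, .inl rfl⟩
  have hlt := sub_two_mul_sub_two_add_sub_one_lt (by omega : 4 ≤ n) hk
  have hdeg {a b : Fin n} (hab : G.Adj a b) :
      #(univ \ {a, b}) * (k - 2) + #(univ.erase z) = (n - 2) * (k - 2) + n - 1 := by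
    rw [G.card_compl_pair_of_adj hab, card_erase_of_mem (mem_univ z), card_univ,
      Fintype.card_fin]
    omega
  have hnotMem {a b : Fin n} (hab : G.Adj a b) :
      (∏ l ∈ univ \ {a, b}, (X l : MvPolynomial (Fin n) K)) ^ (k - 2) *
        ∏ i ∈ univ.erase z, X i ∉ compIdeal K G ^ k :=
    prod_X_pow_mul_prod_X_notMem_compIdeal_pow (by rwa [hdeg hab, Fintype.card_fin])
  refine ⟨fun a b hab => ⟨?_, hlt, mem_symbPow_compIdeal hstar hab hk, hnotMem hab⟩, ?_⟩
  · rw [totalDegree_prod_X_pow_mul_prod_X, hdeg hab]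
  · obtain ⟨i, hi⟩ := exists_ne z
    exact fun heq => hnotMem (hstar i hi) (heq ▸ mem_symbPow_compIdeal hstar (hstar i hi) hk)

/-- For the star graph on `n ≥ 5` vertices with center `z` and every `k ≥ 2`:
for any edge `{a,b}` of `G`, the monomial `(∏_{l ∉ {a,b}} x_l)^{k-2} ⋅ ∏_{i ≠ z} x_i`
has degree `(n-2)(k-2)+n-1 < k(n-2)`, lies in `I_c(G)^(k)` but not in `I_c(G)^k`;
in particular `I_c(G)^(k) ≠ I_c(G)^k`. -/
theorem stmt12 {n : ℕ} (hn : 5 ≤ n) (K : Type*) [Field K]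
    (z : Fin n) (hz : (z : ℕ) = 0)
    (G : SimpleGraph (Fin n))
    (hG : ∀ i j, G.Adj i j ↔ i ≠ j ∧ (i = z ∨ j = z))
    (k : ℕ) (hk : 2 ≤ k) :
    (∀ a b : Fin n, G.Adj a b →
      ((∏ l ∈ Finset.univ \ {a, b}, (X l : MvPolynomial (Fin n) K)) ^ (k - 2) *
          ∏ i ∈ Finset.univ.erase z, X i).totalDegree = (n - 2) * (k - 2) + n - 1 ∧
      (n - 2) * (k - 2) + n - 1 < k * (n - 2) ∧
      ((∏ l ∈ Finset.univ \ {a, b}, (X l : MvPolynomial (Fin n) K)) ^ (k - 2) *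
          ∏ i ∈ Finset.univ.erase z, X i) ∈ symbPow (compIdeal K G) k ∧
      ((∏ l ∈ Finset.univ \ {a, b}, (X l : MvPolynomial (Fin n) K)) ^ (k - 2) *
          ∏ i ∈ Finset.univ.erase z, X i) ∉ compIdeal K G ^ k) ∧
    symbPow (compIdeal K G) k ≠ compIdeal K G ^ k :=
  stmt12_general hn K z G hG k hk
end

section
/- Let G be a finite simple graph on {x_1,...,x_n} with no isolated vertex that is not a star graph. Then the product x_1 x_2 ⋯ x_n of all variables lies in the second symbolic power I_c(G)^(2). -/
open MvPolynomial

/-- `G` is a star graph: there is a center adjacent to exactly the other vertices, with no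
further edges. -/
def IsStarGraph {V : Type*} (G : SimpleGraph V) : Prop :=
  ∃ c, ∀ i j, G.Adj i j ↔ i ≠ j ∧ (i = c ∨ j = c)

/-- If `G` has no isolated vertex and is not a star graph, then the product of all the
variables lies in the second symbolic power of `I_c(G)`. -/
theorem stmt13 {n : ℕ} (hn : 0 < n) (K : Type*) [Field K] (G : SimpleGraph (Fin n))
    (hiso : ∀ v, ∃ w, G.Adj v w) (hstar : ¬ IsStarGraph G) :
    (∏ i, (X i : MvPolynomial (Fin n) K)) ∈ symbPow (compIdeal K G) 2 := by
  simp only [symbPow, Ideal.mem_iInf]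
  intro p hp
  obtain ⟨⟨hprime, hle⟩, -⟩ := hp
  -- first variable in p
  obtain ⟨w, hw⟩ := hiso ⟨0, hn⟩
  have hgen1 : (∏ l ∈ Finset.univ \ {(⟨0, hn⟩ : Fin n), w}, (X l : MvPolynomial (Fin n) K)) ∈ p :=
    hle (Ideal.subset_span ⟨_, _, hw, rfl⟩)
  obtain ⟨a, -, ha⟩ := (Ideal.IsPrime.prod_mem_iff (hp := hprime)).mp hgen1
  -- second variable in p
  obtain ⟨b, hb⟩ := hiso a
  have hgen2 : (∏ l ∈ Finset.univ \ {a, b}, (X l : MvPolynomial (Fin n) K)) ∈ p :=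
    hle (Ideal.subset_span ⟨_, _, hb, rfl⟩)
  obtain ⟨c, hcmem, hc⟩ := (Ideal.IsPrime.prod_mem_iff (hp := hprime)).mp hgen2
  have hca : c ≠ a := by
    simp only [Finset.mem_sdiff, Finset.mem_insert, Finset.mem_singleton] at hcmem
    tauto
  -- factor the full product
  have h1 : (∏ i, (X i : MvPolynomial (Fin n) K)) =
      X a * X c * ∏ i ∈ (Finset.univ.erase a).erase c, X i := by
    rw [mul_assoc, Finset.mul_prod_erase _ _ (Finset.mem_erase.mpr ⟨hca, Finset.mem_univ c⟩),
      Finset.mul_prod_erase _ _ (Finset.mem_univ a)]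
  rw [h1, sq]
  exact Ideal.mul_mem_right _ _ (Ideal.mul_mem_mul ha hc)
end

section
/- Let G be a simple graph on n ≥ 5 vertices {x_1,...,x_n} with no isolated vertex and at least one edge. Then for every integer k ≥ 2, I_c(G)^(k) ≠ I_c(G)^k. -/
open MvPolynomial

/-!
The symbolic power contains a monomial of too small degree. Every prime `p ⊇ I_c(G)` contains
two distinct variables: it contains a generator, hence some `x_a`, and the generator of an edge
at `a` omits `x_a`, hence `p` contains some other `x_b`. So `x_1 ⋯ x_n ∈ p ^ 2`, and for an edge
generator `g` the monomial `x_1 ⋯ x_n * g ^ (k - 2)` of degree `n + (k - 2)(n - 2)` lies in every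
`p ^ k`. On the other hand `I_c(G) ^ k` lies in the `k(n - 2)`-th power of the ideal of the
variables, and `n + (k - 2)(n - 2) < k(n - 2)` as soon as `n ≥ 5`.
-/

namespace MvPolynomial

variable {σ R : Type*}

theorem IsHomogeneous.mem_pow_idealOfVars_iff [CommSemiring R] {φ : MvPolynomial σ R} {d : ℕ}
    (hφ : φ.IsHomogeneous d) (h0 : φ ≠ 0) (N : ℕ) :
    φ ∈ idealOfVars σ R ^ N ↔ N ≤ d := by
  have hdeg : ∀ x ∈ φ.support, x.degree = d := fun x hx ↦ by
    by_contra h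
    exact mem_support_iff.mp hx (hφ.coeff_eq_zero h)
  obtain ⟨x, hx⟩ := support_nonempty.mpr h0
  rw [MvPolynomial.mem_pow_idealOfVars_iff]
  refine ⟨fun h ↦ hdeg x hx ▸ h x hx, fun h y hy ↦ (hdeg y hy).symm ▸ h⟩

theorem isHomogeneous_prod_X [CommSemiring R] (s : Finset σ) :
    (∏ l ∈ s, X l : MvPolynomial σ R).IsHomogeneous s.card := by
  simpa using IsHomogeneous.prod s (fun l ↦ (X l : MvPolynomial σ R)) (fun _ ↦ 1)
    fun l _ ↦ isHomogeneous_X R l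

theorem prod_X_ne_zero [CommRing R] [IsDomain R] (s : Finset σ) :
    (∏ l ∈ s, X l : MvPolynomial σ R) ≠ 0 :=
  Finset.prod_ne_zero_iff.mpr fun l _ ↦ X_ne_zero l

end MvPolynomial

theorem mem_symbPow_of_forall_isPrime {R : Type*} [CommRing R] {I : Ideal R} {k : ℕ} {x : R}
    (h : ∀ p : Ideal R, p.IsPrime → I ≤ p → x ∈ p ^ k) : x ∈ symbPow I k := by
  simp only [symbPow, Ideal.mem_iInf]
  exact fun p hp ↦ h p hp.1.1 hp.1.2

section compIdeal

variable {V : Type*} [Fintype V] [DecidableEq V] {K : Type*} [Field K] {G : SimpleGraph V}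

theorem prod_compl_pair_mem_compIdeal {i j : V} (h : G.Adj i j) :
    ∏ l ∈ Finset.univ \ {i, j}, (X l : MvPolynomial V K) ∈ compIdeal K G :=
  Ideal.subset_span ⟨i, j, h, rfl⟩

theorem isHomogeneous_prod_compl_pair {i j : V} (hij : i ≠ j) :
    (∏ l ∈ Finset.univ \ {i, j}, X l : MvPolynomial V K).IsHomogeneous
      (Fintype.card V - 2) := by
  convert isHomogeneous_prod_X (R := K) (Finset.univ \ {i, j})
  rw [Finset.card_sdiff_of_subset (Finset.subset_univ _), Finset.card_univ, Finset.card_pair hij]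

theorem compIdeal_pow_le_pow_idealOfVars (k : ℕ) :
    compIdeal K G ^ k ≤ idealOfVars V K ^ (k * (Fintype.card V - 2)) := by
  have hle : compIdeal K G ≤ idealOfVars V K ^ (Fintype.card V - 2) := by
    rw [compIdeal, Ideal.span_le]
    rintro _ ⟨i, j, hij, rfl⟩
    exact ((isHomogeneous_prod_compl_pair hij.ne).mem_pow_idealOfVars_iff
      (prod_X_ne_zero _) _).mpr le_rfl
  calc compIdeal K G ^ k ≤ (idealOfVars V K ^ (Fintype.card V - 2)) ^ k :=
        Ideal.pow_right_mono hle k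
    _ = _ := by rw [← pow_mul, mul_comm]

theorem exists_two_X_mem_of_compIdeal_le (hiso : ∀ v, ∃ w, G.Adj v w) {i j : V}
    (hij : G.Adj i j) {p : Ideal (MvPolynomial V K)} [p.IsPrime] (hp : compIdeal K G ≤ p) :
    ∃ a b, a ≠ b ∧ X a ∈ p ∧ X b ∈ p := by
  obtain ⟨a, -, ha⟩ := Ideal.IsPrime.prod_mem_iff.mp (hp (prod_compl_pair_mem_compIdeal hij))
  obtain ⟨w, haw⟩ := hiso a
  obtain ⟨b, hb, hb'⟩ := Ideal.IsPrime.prod_mem_iff.mp (hp (prod_compl_pair_mem_compIdeal haw))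
  refine ⟨a, b, ?_, ha, hb'⟩
  rintro rfl
  simp at hb

theorem prod_X_mem_sq_of_compIdeal_le (hiso : ∀ v, ∃ w, G.Adj v w) {i j : V}
    (hij : G.Adj i j) {p : Ideal (MvPolynomial V K)} [p.IsPrime] (hp : compIdeal K G ≤ p) :
    ∏ l, (X l : MvPolynomial V K) ∈ p ^ 2 := by
  obtain ⟨a, b, hab, ha, hb⟩ := exists_two_X_mem_of_compIdeal_le hiso hij hp
  rw [← Finset.prod_sdiff (Finset.subset_univ {a, b}), Finset.prod_pair hab, sq]
  exact Ideal.mul_mem_left _ _ (Ideal.mul_mem_mul ha hb)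

theorem prod_X_mul_pow_mem_symbPow (hiso : ∀ v, ∃ w, G.Adj v w) {i j : V}
    (hij : G.Adj i j) {k : ℕ} (hk : 2 ≤ k) :
    (∏ l, X l) * (∏ l ∈ Finset.univ \ {i, j}, X l) ^ (k - 2) ∈ symbPow (compIdeal K G) k := by
  refine mem_symbPow_of_forall_isPrime fun p _ hp ↦ ?_
  rw [← Nat.add_sub_cancel' hk, pow_add, Nat.add_sub_cancel_left]
  exact Ideal.mul_mem_mul (prod_X_mem_sq_of_compIdeal_le hiso hij hp)
    (Ideal.pow_mem_pow (hp (prod_compl_pair_mem_compIdeal hij)) _)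

end compIdeal

/-- For a graph on `n ≥ 5` vertices with no isolated vertex and at least one edge,
`I_c(G)^(k) ≠ I_c(G)^k` for every `k ≥ 2`. -/
theorem stmt14 {n : ℕ} (hn : 5 ≤ n) (K : Type*) [Field K] (G : SimpleGraph (Fin n))
    (hiso : ∀ v, ∃ w, G.Adj v w) (hedge : ∃ i j, G.Adj i j)
    (k : ℕ) (hk : 2 ≤ k) :
    symbPow (compIdeal K G) k ≠ compIdeal K G ^ k := by
  obtain ⟨i, j, hij⟩ := hedge
  set m : MvPolynomial (Fin n) K := (∏ l, X l) * (∏ l ∈ Finset.univ \ {i, j}, X l) ^ (k - 2)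
  have hm : m.IsHomogeneous (n + (n - 2) * (k - 2)) := by
    simpa using (isHomogeneous_prod_X Finset.univ).mul
      ((isHomogeneous_prod_compl_pair (K := K) hij.ne).pow (k - 2))
  have hm0 : m ≠ 0 := mul_ne_zero (prod_X_ne_zero _) (pow_ne_zero _ (prod_X_ne_zero _))
  have hdeg : n + (n - 2) * (k - 2) < k * (n - 2) := by
    obtain ⟨k, rfl⟩ := Nat.exists_eq_add_of_le hk
    rw [Nat.add_sub_cancel_left, add_mul, mul_comm]
    omega
  intro heq
  have hmem := compIdeal_pow_le_pow_idealOfVars k (heq ▸ prod_X_mul_pow_mem_symbPow hiso hij hk)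
  rw [Fintype.card_fin, hm.mem_pow_idealOfVars_iff hm0] at hmem
  omega
end

section
/- Let H be an (n-2)-uniform clutter on n vertices whose edge ideal I(H) satisfies I(H)^(k) = I(H)^k for some integer k ≥ 2. Then I(H)^(k) = I(H)^k for all integers k ≥ 1. -/
open MvPolynomial

/-- The edge ideal of a clutter with edge set `E` on vertex set `Fin n`. -/
noncomputable def clutterIdeal {n : ℕ} (K : Type*) [Field K] (E : Set (Finset (Fin n))) :
    Ideal (MvPolynomial (Fin n) K) :=
  Ideal.span {m | ∃ e ∈ E, m = ∏ i ∈ e, X i}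

/-!
Both powers are monomial ideals: `x^m` lies in `I^(k)` iff `m` has weight at least `k` on every
minimal vertex cover, and in `I^k` iff `m` dominates a sum of `k` edge indicators. An
`(n-2)`-uniform clutter without the empty edge consists of the complements of the edges of a graph
`G`. If `G` has a vertex with three neighbours, a path with two edges together with an edge disjoint
from it, or three pairwise non-adjacent non-isolated vertices, then for every `k ≥ 2` an explicit
monomial lies in `I^(k)` but not in `I^k`: it has weight at least `k` on every cover, yet too
little weight on a small vertex set `T` that every edge of `H` meets in many vertices. Otherwise,
up to isolated vertices, `G` is empty, an edge, two disjoint edges, a path with two or three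
edges, a triangle or a 4-cycle, and in each case the cover inequalities for `m` give explicit
multiplicities for `k` edges whose indicator sum lies below `m`.
-/

open Pointwise

namespace Clutter

variable {n : ℕ} {K : Type*} [Field K]

section MonomialIdeals

noncomputable def indicator (e : Finset (Fin n)) : Fin n →₀ ℕ := ∑ i ∈ e, Finsupp.single i 1

lemma indicator_apply (e : Finset (Fin n)) (x : Fin n) :
    indicator e x = if x ∈ e then 1 else 0 := by
  classical
  simp [indicator, Finsupp.finsetSum_apply, Finsupp.single_apply]

lemma prod_X_eq_monomial_indicator (e : Finset (Fin n)) :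
    (∏ i ∈ e, X i : MvPolynomial (Fin n) K) = monomial (indicator e) 1 := by
  simp [indicator, monomial_sum_one, X]

variable (K) in
noncomputable def monSpan (A : Set (Fin n →₀ ℕ)) : Ideal (MvPolynomial (Fin n) K) :=
  Ideal.span ((fun d => monomial d 1) '' A)

lemma mem_monSpan_iff {A : Set (Fin n →₀ ℕ)} {f : MvPolynomial (Fin n) K} :
    f ∈ monSpan K A ↔ ∀ m ∈ f.support, ∃ d ∈ A, d ≤ m :=
  mem_ideal_span_monomial_image

lemma monSpan_mul (A B : Set (Fin n →₀ ℕ)) :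
    monSpan K A * monSpan K B = monSpan K (A + B) := by
  rw [monSpan, monSpan, monSpan, Ideal.span_mul_span']
  congr 1
  ext x
  simp only [Set.mem_mul, Set.mem_image, Set.mem_add]
  constructor
  · rintro ⟨_, ⟨a, ha, rfl⟩, _, ⟨b, hb, rfl⟩, rfl⟩
    exact ⟨a + b, ⟨a, ha, b, hb, rfl⟩, by simp [monomial_mul]⟩
  · rintro ⟨_, ⟨a, ha, b, hb, rfl⟩, rfl⟩
    exact ⟨_, ⟨a, ha, rfl⟩, _, ⟨b, hb, rfl⟩, by simp [monomial_mul]⟩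

lemma monSpan_zero : monSpan K ({0} : Set (Fin n →₀ ℕ)) = ⊤ := by
  simp [monSpan]

def edgeSums (E : Set (Finset (Fin n))) : ℕ → Set (Fin n →₀ ℕ)
  | 0 => {0}
  | k + 1 => edgeSums E k + indicator '' E

lemma clutterIdeal_eq_monSpan (E : Set (Finset (Fin n))) :
    clutterIdeal K E = monSpan K (indicator '' E) := by
  rw [clutterIdeal, monSpan, Set.image_image]
  congr 1
  ext f
  simp [prod_X_eq_monomial_indicator, eq_comm]

lemma clutterIdeal_pow_eq_monSpan (E : Set (Finset (Fin n))) (k : ℕ) :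
    clutterIdeal K E ^ k = monSpan K (edgeSums E k) := by
  induction k with
  | zero => rw [pow_zero, Ideal.one_eq_top, edgeSums, monSpan_zero]
  | succ k ih => rw [pow_succ, ih, clutterIdeal_eq_monSpan, monSpan_mul, edgeSums]

lemma add_mem_edgeSums {E : Set (Finset (Fin n))} {k₁ k₂ : ℕ} {d₁ d₂ : Fin n →₀ ℕ}
    (h₁ : d₁ ∈ edgeSums E k₁) (h₂ : d₂ ∈ edgeSums E k₂) : d₁ + d₂ ∈ edgeSums E (k₁ + k₂) := by
  induction k₂ generalizing d₂ with
  | zero =>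
    rw [edgeSums, Set.mem_singleton_iff] at h₂
    simpa [h₂] using h₁
  | succ k ih =>
    obtain ⟨d, hd, _, he, rfl⟩ := Set.mem_add.1 h₂
    exact Set.mem_add.2 ⟨d₁ + d, ih hd, _, he, add_assoc _ _ _⟩

lemma nsmul_indicator_mem_edgeSums {E : Set (Finset (Fin n))} {e : Finset (Fin n)} (he : e ∈ E)
    (q : ℕ) : q • indicator e ∈ edgeSums E q := by
  induction q with
  | zero => simp [edgeSums]
  | succ q ih => exact Set.mem_add.2 ⟨_, ih, _, ⟨e, he, rfl⟩, (succ_nsmul _ _).symm⟩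

lemma mul_le_sum_of_mem_edgeSums {E : Set (Finset (Fin n))} {T : Finset (Fin n)} {γ : ℕ}
    (hT : ∀ e ∈ E, γ ≤ (T ∩ e).card) {k : ℕ} {d : Fin n →₀ ℕ} (hd : d ∈ edgeSums E k) :
    k * γ ≤ ∑ x ∈ T, d x := by
  classical
  induction k generalizing d with
  | zero => simp
  | succ k ih =>
    obtain ⟨d', hd', _, ⟨e, he, rfl⟩, rfl⟩ := Set.mem_add.1 hd
    have hsum : ∑ x ∈ T, indicator e x = (T ∩ e).card := by
      simp [indicator_apply]
    simp only [Finsupp.add_apply, Finset.sum_add_distrib, hsum]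
    linarith [ih hd', hT e he]

end MonomialIdeals

section VariableIdeals

variable (K) in
noncomputable def varIdeal (C : Finset (Fin n)) : Ideal (MvPolynomial (Fin n) K) :=
  Ideal.span (X '' (C : Set (Fin n)))

lemma X_mem_varIdeal_iff {C : Finset (Fin n)} {i : Fin n} :
    (X i : MvPolynomial (Fin n) K) ∈ varIdeal K C ↔ i ∈ C := by
  classical
  simp [varIdeal, mem_ideal_span_X_image, support_X, Finsupp.single_apply]

variable (K) in
noncomputable def killVars (C : Finset (Fin n)) :
    MvPolynomial (Fin n) K →ₐ[K] MvPolynomial (Fin n) K :=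
  aeval fun i => if i ∈ C then 0 else X i

lemma sub_killVars_mem_varIdeal (C : Finset (Fin n)) (f : MvPolynomial (Fin n) K) :
    f - killVars K C f ∈ varIdeal K C := by
  induction f using MvPolynomial.induction_on with
  | C a => simp [killVars]
  | add p q hp hq =>
    rw [map_add, add_sub_add_comm]
    exact add_mem hp hq
  | mul_X p i hp =>
    rw [map_mul, killVars, aeval_X, ← killVars]
    split_ifs with hi
    · rw [mul_zero, sub_zero]
      exact Ideal.mul_mem_left _ p (X_mem_varIdeal_iff.2 hi)
    · rw [← sub_mul]
      exact Ideal.mul_mem_right _ _ hp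

lemma varIdeal_eq_ker (C : Finset (Fin n)) : varIdeal K C = RingHom.ker (killVars K C) := by
  refine le_antisymm ?_ fun f hf => ?_
  · rw [varIdeal, Ideal.span_le]
    rintro _ ⟨i, hi, rfl⟩
    simp [killVars, Finset.mem_coe.1 hi]
  · simpa [RingHom.mem_ker.1 hf] using sub_killVars_mem_varIdeal C f

lemma varIdeal_isPrime (C : Finset (Fin n)) : (varIdeal K C).IsPrime := by
  rw [varIdeal_eq_ker]
  exact RingHom.ker_isPrime _

lemma varIdeal_eq_clutterIdeal (C : Finset (Fin n)) :
    varIdeal K C = clutterIdeal K ((fun i => {i}) '' (C : Set (Fin n))) := by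
  rw [varIdeal, clutterIdeal]
  congr 1
  ext f
  simp [eq_comm]

lemma monomial_mem_varIdeal_pow {C : Finset (Fin n)} {k : ℕ} {a : Fin n →₀ ℕ}
    (h : k ≤ ∑ i ∈ C, a i) : (monomial a 1 : MvPolynomial (Fin n) K) ∈ varIdeal K C ^ k := by
  have hprod : ∏ i ∈ C, (X i : MvPolynomial (Fin n) K) ^ a i ∈ varIdeal K C ^ ∑ i ∈ C, a i := by
    rw [← Finset.prod_pow_eq_pow_sum]
    exact Ideal.prod_mem_prod fun i hi => Ideal.pow_mem_pow (X_mem_varIdeal_iff.2 hi) _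
  refine Ideal.pow_le_pow_right h (Ideal.mem_of_dvd _ ?_ hprod)
  rw [monomial_eq, C_1, one_mul, Finsupp.prod_fintype _ _ fun i => pow_zero _]
  exact Finset.prod_dvd_prod_of_subset _ _ _ (Finset.subset_univ C)

lemma le_sum_of_mem_varIdeal_pow {C : Finset (Fin n)} {k : ℕ} {f : MvPolynomial (Fin n) K}
    (hf : f ∈ varIdeal K C ^ k) {m : Fin n →₀ ℕ} (hm : m ∈ f.support) : k ≤ ∑ i ∈ C, m i := by
  classical
  rw [varIdeal_eq_clutterIdeal, clutterIdeal_pow_eq_monSpan, mem_monSpan_iff] at hf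
  obtain ⟨d, hd, hdm⟩ := hf m hm
  have hC : ∀ e ∈ (fun i => {i}) '' (C : Set (Fin n)), 1 ≤ (C ∩ e).card := by
    rintro _ ⟨i, hi, rfl⟩
    simp [Finset.inter_singleton_of_mem (Finset.mem_coe.1 hi)]
  calc k = k * 1 := (mul_one k).symm
    _ ≤ ∑ i ∈ C, d i := mul_le_sum_of_mem_edgeSums hC hd
    _ ≤ ∑ i ∈ C, m i := Finset.sum_le_sum fun i _ => hdm i

end VariableIdeals

section Covers

def IsCover (E : Set (Finset (Fin n))) (C : Finset (Fin n)) : Prop :=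
  ∀ e ∈ E, ∃ i ∈ C, i ∈ e

lemma IsCover.mono {E : Set (Finset (Fin n))} {C C' : Finset (Fin n)} (hC : IsCover E C)
    (h : C ⊆ C') : IsCover E C' := fun e he =>
  let ⟨i, hi, hie⟩ := hC e he
  ⟨i, h hi, hie⟩

lemma minimal_isCover_of_erase {E : Set (Finset (Fin n))} {C : Finset (Fin n)}
    (hC : IsCover E C) (herase : ∀ x ∈ C, ¬ IsCover E (C.erase x)) : Minimal (IsCover E) C := by
  classical
  refine ⟨hC, fun C' hC' hle x hx => ?_⟩
  by_contra hx'
  exact herase x hx (hC'.mono fun y hy => Finset.mem_erase.2 ⟨fun h => hx' (h ▸ hy), hle hy⟩)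

open Classical in
noncomputable def varsIn (q : Ideal (MvPolynomial (Fin n) K)) : Finset (Fin n) :=
  Finset.univ.filter fun i => X i ∈ q

lemma mem_varsIn {q : Ideal (MvPolynomial (Fin n) K)} {i : Fin n} : i ∈ varsIn q ↔ X i ∈ q := by
  simp [varsIn]

lemma isCover_of_isPrime {E : Set (Finset (Fin n))} {q : Ideal (MvPolynomial (Fin n) K)}
    (hq : q.IsPrime) (hle : clutterIdeal K E ≤ q) :
    IsCover E (varsIn q) := by
  intro e he
  have hmem : ∏ i ∈ e, (X i : MvPolynomial (Fin n) K) ∈ q := hle (Ideal.subset_span ⟨e, he, rfl⟩)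
  obtain ⟨i, hie, hi⟩ := (Ideal.IsPrime.prod_mem_iff (hp := hq)).1 hmem
  exact ⟨i, mem_varsIn.2 hi, hie⟩

lemma varIdeal_varsIn_le (q : Ideal (MvPolynomial (Fin n) K)) :
    varIdeal K (varsIn q) ≤ q := by
  rw [varIdeal, Ideal.span_le]
  rintro _ ⟨i, hi, rfl⟩
  exact mem_varsIn.1 hi

lemma varIdeal_mem_minimalPrimes {E : Set (Finset (Fin n))} {C : Finset (Fin n)}
    (hC : Minimal (IsCover E) C) : varIdeal K C ∈ (clutterIdeal K E).minimalPrimes := by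
  refine ⟨⟨varIdeal_isPrime C, ?_⟩, fun q ⟨hq, hle⟩ hqC => ?_⟩
  · rw [clutterIdeal, Ideal.span_le]
    rintro _ ⟨e, he, rfl⟩
    obtain ⟨i, hiC, hie⟩ := hC.1 e he
    exact Ideal.mem_of_dvd _ (Finset.dvd_prod_of_mem _ hie) (X_mem_varIdeal_iff.2 hiC)
  · have hsub : varsIn q ⊆ C := fun i hi => X_mem_varIdeal_iff.1 (hqC (mem_varsIn.1 hi))
    rw [← hC.eq_of_le (isCover_of_isPrime hq hle) hsub]
    exact varIdeal_varsIn_le q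

end Covers

section SymbolicPowers

def IsSymbolicExponent (E : Set (Finset (Fin n))) (k : ℕ) (m : Fin n →₀ ℕ) : Prop :=
  ∀ C, Minimal (IsCover E) C → k ≤ ∑ i ∈ C, m i

def DominatesEdgeSums (E : Set (Finset (Fin n))) (k : ℕ) : Prop :=
  ∀ m, IsSymbolicExponent E k m → ∃ d ∈ edgeSums E k, d ≤ m

theorem symbPow_eq_pow_of_dominatesEdgeSums {E : Set (Finset (Fin n))} {k : ℕ}
    (h : DominatesEdgeSums E k) : symbPow (clutterIdeal K E) k = clutterIdeal K E ^ k := by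
  refine le_antisymm (fun f hf => ?_) (le_iInf₂ fun p hp => Ideal.pow_right_mono hp.1.2 k)
  rw [clutterIdeal_pow_eq_monSpan, mem_monSpan_iff]
  refine fun m hm => h m fun C hC => le_sum_of_mem_varIdeal_pow ?_ hm
  exact Ideal.mem_iInf.1 (Ideal.mem_iInf.1 hf _) (varIdeal_mem_minimalPrimes hC)

/-- The monomial with exponent `a` lies in every `p ^ k` by `hcover`, but not in `I ^ k`, since by
`hT` every exponent in `edgeSums E k` has weight at least `k * γ` on `T`. -/
theorem symbPow_ne_pow_of_weight {E : Set (Finset (Fin n))} {k : ℕ} (a : Fin n → ℕ)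
    (hcover : ∀ C, IsCover E C → k ≤ ∑ i ∈ C, a i) (T : Finset (Fin n)) (γ : ℕ)
    (hT : ∀ e ∈ E, γ ≤ (T ∩ e).card) (hlt : ∑ i ∈ T, a i < k * γ) :
    symbPow (clutterIdeal K E) k ≠ clutterIdeal K E ^ k := by
  set a' : Fin n →₀ ℕ := Finsupp.equivFunOnFinite.symm a
  intro heq
  have hmem : (monomial a' 1 : MvPolynomial (Fin n) K) ∈ symbPow (clutterIdeal K E) k := by
    refine Ideal.mem_iInf.2 fun p => Ideal.mem_iInf.2 fun hp => ?_
    refine Ideal.pow_right_mono (varIdeal_varsIn_le p) k (monomial_mem_varIdeal_pow ?_)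
    exact hcover _ (isCover_of_isPrime hp.1.1 hp.1.2)
  rw [heq, clutterIdeal_pow_eq_monSpan, mem_monSpan_iff] at hmem
  obtain ⟨d, hd, hda⟩ := hmem a' (by simp)
  have := mul_le_sum_of_mem_edgeSums hT hd
  have : ∑ i ∈ T, d i ≤ ∑ i ∈ T, a i := Finset.sum_le_sum fun i _ => hda i
  omega

end SymbolicPowers

section ComplementClutter

def pairCompl (u v : Fin n) : Finset (Fin n) := {u, v}ᶜ

lemma mem_pairCompl {u v x : Fin n} : x ∈ pairCompl u v ↔ x ≠ u ∧ x ≠ v := by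
  simp [pairCompl]

lemma pairCompl_comm (u v : Fin n) : pairCompl u v = pairCompl v u := by
  rw [pairCompl, pairCompl, Finset.pair_comm]

lemma indicator_pairCompl_apply (u v x : Fin n) :
    indicator (pairCompl u v) x = if x = u ∨ x = v then 0 else 1 := by
  simp only [indicator_apply, mem_pairCompl]
  split_ifs <;> tauto

lemma card_sub_two_le_card_inter_pairCompl (T : Finset (Fin n)) (u v : Fin n) :
    T.card - 2 ≤ (T ∩ pairCompl u v).card := by
  classical
  have h : T \ pairCompl u v ⊆ {u, v} := fun x hx => by
    simp only [Finset.mem_sdiff, mem_pairCompl, not_and_or, not_not] at hx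
    simpa using hx.2
  have := Finset.card_le_card h
  have := Finset.card_le_two (a := u) (b := v)
  have := Finset.card_sdiff_add_card_inter T (pairCompl u v)
  omega

def complClutter (G : SimpleGraph (Fin n)) : Set (Finset (Fin n)) :=
  {e | ∃ u v, G.Adj u v ∧ pairCompl u v = e}

lemma pairCompl_mem_complClutter {G : SimpleGraph (Fin n)} {u v : Fin n} (h : G.Adj u v) :
    pairCompl u v ∈ complClutter G :=
  ⟨u, v, h, rfl⟩

lemma exists_eq_complClutter {E : Set (Finset (Fin n))} (hunif : ∀ e ∈ E, e.card = n - 2)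
    (h0 : ∅ ∉ E) : ∃ G : SimpleGraph (Fin n), E = complClutter G := by
  refine ⟨SimpleGraph.fromRel fun u v => pairCompl u v ∈ E, Set.ext fun e => ⟨fun he => ?_, ?_⟩⟩
  · have hpos : 0 < e.card :=
      Finset.card_pos.2 (Finset.nonempty_iff_ne_empty.2 fun h => h0 (h ▸ he))
    have hle : e.card ≤ n := by simpa using Finset.card_le_univ e
    obtain ⟨u, v, huv, hcompl⟩ : ∃ u v, u ≠ v ∧ eᶜ = {u, v} := by
      refine Finset.card_eq_two.1 ?_
      rw [Finset.card_compl, Fintype.card_fin, hunif e he]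
      have := hunif e he
      omega
    have he' : pairCompl u v = e := by rw [pairCompl, ← hcompl, compl_compl]
    exact ⟨u, v, (SimpleGraph.fromRel_adj _ _ _).2 ⟨huv, Or.inl (he' ▸ he)⟩, he'⟩
  · rintro ⟨u, v, huv, rfl⟩
    rcases ((SimpleGraph.fromRel_adj _ _ _).1 huv).2 with h | h
    · exact h
    · rwa [pairCompl_comm]

variable {G : SimpleGraph (Fin n)}

lemma isCover_complClutter_iff {C : Finset (Fin n)} :
    IsCover (complClutter G) C ↔ ∀ u v, G.Adj u v → ∃ x ∈ C, x ≠ u ∧ x ≠ v := by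
  simp only [IsCover, complClutter, Set.mem_ofPred_eq, forall_exists_index, and_imp]
  constructor
  · intro h u v huv
    simpa [mem_pairCompl] using h _ u v huv rfl
  · rintro h _ u v huv rfl
    simpa [mem_pairCompl] using h u v huv

lemma not_isCover_of_subset_pair {C : Finset (Fin n)} {u v : Fin n} (huv : G.Adj u v)
    (hC : C ⊆ {u, v}) : ¬ IsCover (complClutter G) C := fun h => by
  obtain ⟨x, hx, hxu, hxv⟩ := isCover_complClutter_iff.1 h u v huv
  simpa [hxu, hxv] using hC hx

namespace IsSymbolicExponent

variable {k : ℕ} {m : Fin n →₀ ℕ}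

lemma le_of_isolated (hm : IsSymbolicExponent (complClutter G) k m) {a b x : Fin n}
    (hab : G.Adj a b) (hx : ∀ y, ¬ G.Adj x y) : k ≤ m x := by
  have hcover : IsCover (complClutter G) {x} := isCover_complClutter_iff.2 fun u v huv =>
    ⟨x, Finset.mem_singleton_self x, fun h => hx v (h ▸ huv), fun h => hx u (h ▸ huv.symm)⟩
  have hmin := minimal_isCover_of_erase hcover fun y hy =>
    not_isCover_of_subset_pair hab (by simp [Finset.mem_singleton.1 hy])
  simpa using hm _ hmin

lemma le_add_of_not_adj (hm : IsSymbolicExponent (complClutter G) k m) {x y x' y' : Fin n}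
    (hxy : x ≠ y) (hnadj : ¬ G.Adj x y) (hx : G.Adj x x') (hy : G.Adj y y') :
    k ≤ m x + m y := by
  have hcover : IsCover (complClutter G) {x, y} := isCover_complClutter_iff.2 fun u v huv => by
    by_contra! h
    have hx' := h x (by simp)
    have hy' := h y (by simp)
    grind [SimpleGraph.adj_symm]
  have hmin := minimal_isCover_of_erase hcover fun z hz => by
    rcases Finset.mem_insert.1 hz with rfl | hz
    · exact not_isCover_of_subset_pair hy fun t ht => by
        simp only [Finset.mem_erase, Finset.mem_insert, Finset.mem_singleton] at ht ⊢; tauto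
    · exact not_isCover_of_subset_pair hx fun t ht => by
        simp only [Finset.mem_erase, Finset.mem_insert, Finset.mem_singleton] at hz ht ⊢; grind
  simpa [Finset.sum_pair hxy] using hm _ hmin

lemma le_add_add_of_triangle (hm : IsSymbolicExponent (complClutter G) k m) {u v w : Fin n}
    (huv : G.Adj u v) (hvw : G.Adj v w) (huw : G.Adj u w) : k ≤ m u + m v + m w := by
  have hcover : IsCover (complClutter G) {u, v, w} := isCover_complClutter_iff.2 fun s t hst => by
    by_contra! h
    have := h u (by simp)
    have := h v (by simp)
    have := h w (by simp)
    grind [huv.ne, hvw.ne, huw.ne]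
  have hmin := minimal_isCover_of_erase hcover fun z hz => by
    simp only [Finset.mem_insert, Finset.mem_singleton] at hz
    rcases hz with rfl | rfl | rfl
    · exact not_isCover_of_subset_pair hvw fun t ht => by
        simp only [Finset.mem_erase, Finset.mem_insert, Finset.mem_singleton] at ht ⊢; tauto
    · exact not_isCover_of_subset_pair huw fun t ht => by
        simp only [Finset.mem_erase, Finset.mem_insert, Finset.mem_singleton] at ht ⊢; tauto
    · exact not_isCover_of_subset_pair huv fun t ht => by
        simp only [Finset.mem_erase, Finset.mem_insert, Finset.mem_singleton] at ht ⊢; tauto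
  have hsum : ∑ i ∈ ({u, v, w} : Finset (Fin n)), m i = m u + m v + m w := by
    rw [Finset.sum_insert (by simp [huv.ne, huw.ne]), Finset.sum_pair hvw.ne, add_assoc]
  exact hsum ▸ hm _ hmin

end IsSymbolicExponent

end ComplementClutter

section BadConfigurations

lemma add_le_sum_of_mem {C : Finset (Fin n)} {a : Fin n → ℕ} {x y : Fin n} (hx : x ∈ C)
    (hy : y ∈ C) (hxy : x ≠ y) : a x + a y ≤ ∑ i ∈ C, a i := by
  rw [← Finset.sum_pair hxy]
  exact Finset.sum_le_sum_of_subset (Finset.insert_subset hx (Finset.singleton_subset_iff.2 hy))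

variable {G : SimpleGraph (Fin n)}

def HasThreeNeighbors (G : SimpleGraph (Fin n)) : Prop :=
  ∃ c l₁ l₂ l₃, l₁ ≠ l₂ ∧ l₁ ≠ l₃ ∧ l₂ ≠ l₃ ∧ G.Adj c l₁ ∧ G.Adj c l₂ ∧ G.Adj c l₃

def HasPathAndDisjointEdge (G : SimpleGraph (Fin n)) : Prop :=
  ∃ u c w p q, u ≠ w ∧ G.Adj u c ∧ G.Adj c w ∧ G.Adj p q ∧
    p ≠ u ∧ p ≠ c ∧ p ≠ w ∧ q ≠ u ∧ q ≠ c ∧ q ≠ w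

def HasIndepTriple (G : SimpleGraph (Fin n)) : Prop :=
  ∃ x₁ x₂ x₃ y₁ y₂ y₃, x₁ ≠ x₂ ∧ x₁ ≠ x₃ ∧ x₂ ≠ x₃ ∧
    ¬ G.Adj x₁ x₂ ∧ ¬ G.Adj x₁ x₃ ∧ ¬ G.Adj x₂ x₃ ∧ G.Adj x₁ y₁ ∧ G.Adj x₂ y₂ ∧ G.Adj x₃ y₃

theorem symbPow_ne_pow_of_hasThreeNeighbors (hG : HasThreeNeighbors G) {k : ℕ} (hk : 2 ≤ k) :
    symbPow (clutterIdeal K (complClutter G)) k ≠ clutterIdeal K (complClutter G) ^ k := by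
  classical
  obtain ⟨c, l₁, l₂, l₃, h₁₂, h₁₃, h₂₃, hc₁, hc₂, hc₃⟩ := hG
  let a : Fin n → ℕ := fun x =>
    if x = c then 0 else if x = l₁ then 1 else if x = l₂ ∨ x = l₃ then k - 1 else k
  have hc : c ∉ ({l₁, l₂, l₃} : Finset (Fin n)) := by simp [hc₁.ne, hc₂.ne, hc₃.ne]
  have hl₁ : l₁ ∉ ({l₂, l₃} : Finset (Fin n)) := by simp [h₁₂, h₁₃]
  refine symbPow_ne_pow_of_weight a (fun C hC => ?_) {c, l₁, l₂, l₃} 2 ?_ ?_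
  · have hcov := isCover_complClutter_iff.1 hC
    obtain ⟨x, hx, hxc, hx₁⟩ := hcov c l₁ hc₁
    by_cases hxS : x = l₂ ∨ x = l₃
    · obtain ⟨y, hy, hyc, hyx⟩ : ∃ y ∈ C, y ≠ c ∧ y ≠ x := by
        rcases hxS with rfl | rfl
        exacts [hcov c x hc₂, hcov c x hc₃]
      have hax : a x = k - 1 := by simp [a, hxc, hx₁, hxS]
      have hay : 1 ≤ a y := by
        simp only [a]
        split_ifs <;> omega
      have := add_le_sum_of_mem (a := a) hx hy hyx.symm
      omega
    · have hax : a x = k := by simp [a, hxc, hx₁, hxS]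
      exact hax ▸ Finset.single_le_sum_of_canonicallyOrdered hx
  · rintro _ ⟨u, v, -, rfl⟩
    have := card_sub_two_le_card_inter_pairCompl {c, l₁, l₂, l₃} u v
    rw [Finset.card_insert_of_notMem hc, Finset.card_insert_of_notMem hl₁,
      Finset.card_pair h₂₃] at this
    omega
  · have ha : a c = 0 ∧ a l₁ = 1 ∧ a l₂ = k - 1 ∧ a l₃ = k - 1 := by
      simp [a, hc₁.ne', hc₂.ne', hc₃.ne', h₁₂.symm, h₁₃.symm]
    rw [Finset.sum_insert hc, Finset.sum_insert hl₁, Finset.sum_pair h₂₃]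
    omega

theorem symbPow_ne_pow_of_hasPathAndDisjointEdge (hG : HasPathAndDisjointEdge G) {k : ℕ}
    (hk : 2 ≤ k) :
    symbPow (clutterIdeal K (complClutter G)) k ≠ clutterIdeal K (complClutter G) ^ k := by
  classical
  obtain ⟨u, c, w, p, q, huw, huc, hcw, hpq, hpu, hpc, hpw, hqu, hqc, hqw⟩ := hG
  let a : Fin n → ℕ := fun x =>
    if x = p ∨ x = q then k / 2 else if x = u ∨ x = c ∨ x = w then k - k / 2 else k
  have hu : u ∉ ({c, w, p, q} : Finset (Fin n)) := by simp [huc.ne, huw, hpu.symm, hqu.symm]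
  have hc : c ∉ ({w, p, q} : Finset (Fin n)) := by simp [hcw.ne, hpc.symm, hqc.symm]
  have hw : w ∉ ({p, q} : Finset (Fin n)) := by simp [hpw.symm, hqw.symm]
  refine symbPow_ne_pow_of_weight a (fun C hC => ?_) {u, c, w, p, q} 3 ?_ ?_
  · have hcov := isCover_complClutter_iff.1 hC
    obtain ⟨x, hx, hxp, hxq⟩ := hcov p q hpq
    by_cases hxS : x = u ∨ x = c ∨ x = w
    · obtain ⟨y, hy, hyx⟩ : ∃ y ∈ C, y ≠ x := by
        rcases hxS with rfl | rfl | rfl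
        · obtain ⟨y, hy, hyx, -⟩ := hcov x c huc
          exact ⟨y, hy, hyx⟩
        · obtain ⟨y, hy, -, hyx⟩ := hcov u x huc
          exact ⟨y, hy, hyx⟩
        · obtain ⟨y, hy, -, hyx⟩ := hcov c x hcw
          exact ⟨y, hy, hyx⟩
      have hax : a x = k - k / 2 := by simp [a, hxp, hxq, hxS]
      have hay : k / 2 ≤ a y := by
        simp only [a]
        split_ifs <;> omega
      have := add_le_sum_of_mem (a := a) hx hy hyx.symm
      omega
    · have hax : a x = k := by simp [a, hxp, hxq, hxS]
      exact hax ▸ Finset.single_le_sum_of_canonicallyOrdered hx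
  · rintro _ ⟨s, t, -, rfl⟩
    have := card_sub_two_le_card_inter_pairCompl {u, c, w, p, q} s t
    rw [Finset.card_insert_of_notMem hu, Finset.card_insert_of_notMem hc,
      Finset.card_insert_of_notMem hw, Finset.card_pair hpq.ne] at this
    omega
  · have ha : a u = k - k / 2 ∧ a c = k - k / 2 ∧ a w = k - k / 2 ∧ a p = k / 2 ∧ a q = k / 2 := by
      simp [a, hpu.symm, hqu.symm, hpc.symm, hqc.symm, hpw.symm, hqw.symm]
    rw [Finset.sum_insert hu, Finset.sum_insert hc, Finset.sum_insert hw, Finset.sum_pair hpq.ne]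
    omega

lemma adj_of_mem_pair {s t i j : Fin n} (hst : G.Adj s t) (hi : i = s ∨ i = t)
    (hj : j = s ∨ j = t) (hij : i ≠ j) : G.Adj i j := by
  rcases hi with rfl | rfl <;> rcases hj with rfl | rfl
  exacts [absurd rfl hij, hst, hst.symm, absurd rfl hij]

theorem symbPow_ne_pow_of_hasIndepTriple (hG : HasIndepTriple G) {k : ℕ} (hk : 2 ≤ k) :
    symbPow (clutterIdeal K (complClutter G)) k ≠ clutterIdeal K (complClutter G) ^ k := by
  classical
  obtain ⟨x₁, x₂, x₃, y₁, y₂, y₃, h₁₂, h₁₃, h₂₃, hn₁₂, hn₁₃, hn₂₃, hy₁, hy₂, hy₃⟩ := hG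
  let a : Fin n → ℕ := fun x => if x = x₁ then k / 2 else if x = x₂ ∨ x = x₃ then k - k / 2 else k
  have hx₁_nmem : x₁ ∉ ({x₂, x₃} : Finset (Fin n)) := by simp [h₁₂, h₁₃]
  refine symbPow_ne_pow_of_weight a (fun C hC => ?_) {x₁, x₂, x₃} 2 ?_ ?_
  · have hcov := isCover_complClutter_iff.1 hC
    obtain ⟨x, hx, hx₁, -⟩ := hcov x₁ y₁ hy₁
    by_cases hxS : x = x₂ ∨ x = x₃
    · obtain ⟨y, hy, hyx⟩ : ∃ y ∈ C, y ≠ x := by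
        rcases hxS with rfl | rfl
        · obtain ⟨y, hy, hyx, -⟩ := hcov x y₂ hy₂
          exact ⟨y, hy, hyx⟩
        · obtain ⟨y, hy, hyx, -⟩ := hcov x y₃ hy₃
          exact ⟨y, hy, hyx⟩
      have hax : a x = k - k / 2 := by simp [a, hx₁, hxS]
      have hay : k / 2 ≤ a y := by
        simp only [a]
        split_ifs <;> omega
      have := add_le_sum_of_mem (a := a) hx hy hyx.symm
      omega
    · have hax : a x = k := by simp [a, hx₁, hxS]
      exact hax ▸ Finset.single_le_sum_of_canonicallyOrdered hx
  · rintro _ ⟨s, t, hst, rfl⟩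
    have hout : (({x₁, x₂, x₃} : Finset (Fin n)) \ pairCompl s t).card ≤ 1 :=
      Finset.card_le_one.2 fun i hi j hj => by
        by_contra hij
        simp only [Finset.mem_sdiff, Finset.mem_insert, Finset.mem_singleton, mem_pairCompl,
          not_and_or, not_not] at hi hj
        have := adj_of_mem_pair hst hi.2 hj.2 hij
        grind [SimpleGraph.adj_symm]
    have := Finset.card_sdiff_add_card_inter {x₁, x₂, x₃} (pairCompl s t)
    rw [Finset.card_insert_of_notMem hx₁_nmem, Finset.card_pair h₂₃] at this
    omega
  · have ha : a x₁ = k / 2 ∧ a x₂ = k - k / 2 ∧ a x₃ = k - k / 2 := by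
      simp [a, h₁₂.symm, h₁₃.symm]
    rw [Finset.sum_insert hx₁_nmem, Finset.sum_pair h₂₃]
    omega

end BadConfigurations

section GoodGraphs

variable {G : SimpleGraph (Fin n)}

lemma dominatesEdgeSums_of_empty_mem {E : Set (Finset (Fin n))} (h : ∅ ∈ E) (k : ℕ) :
    DominatesEdgeSums E k := fun m _ =>
  ⟨0, by simpa [indicator] using nsmul_indicator_mem_edgeSums h k, zero_le⟩

lemma dominatesEdgeSums_of_forall_not_adj (hG : ∀ a b, ¬ G.Adj a b) {k : ℕ} (hk : k ≠ 0) :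
    DominatesEdgeSums (complClutter G) k := by
  intro m hm
  have hcover : IsCover (complClutter G) ∅ :=
    isCover_complClutter_iff.2 fun u v huv => absurd huv (hG u v)
  have := hm ∅ (minimal_isCover_of_erase hcover fun x hx => absurd hx (Finset.notMem_empty x))
  simp only [Finset.sum_empty, nonpos_iff_eq_zero] at this
  exact absurd this hk

lemma adj_iff_of_edgeSet_eq {L : Set (Sym2 (Fin n))} (hG : G.edgeSet = L) {x y : Fin n} :
    G.Adj x y ↔ s(x, y) ∈ L := by
  rw [← SimpleGraph.mem_edgeSet, hG]

lemma nsmul_indicator_pairCompl_mem_edgeSums {u v : Fin n} (h : G.Adj u v) (q : ℕ) :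
    q • indicator (pairCompl u v) ∈ edgeSums (complClutter G) q :=
  nsmul_indicator_mem_edgeSums (pairCompl_mem_complClutter h) q

lemma nsmul_indicator_pairCompl_apply (q : ℕ) (u v x : Fin n) :
    (q • indicator (pairCompl u v)) x = if x = u ∨ x = v then 0 else q := by
  simp [indicator_pairCompl_apply]

theorem dominatesEdgeSums_of_edgeSet_eq_single {u v : Fin n} (hG : G.edgeSet = {s(u, v)})
    (k : ℕ) : DominatesEdgeSums (complClutter G) k := by
  have hadj {x y : Fin n} : G.Adj x y ↔ _ := adj_iff_of_edgeSet_eq hG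
  simp only [Set.mem_singleton_iff, Sym2.eq_iff] at hadj
  have huv : G.Adj u v := hadj.2 (by tauto)
  intro m hm
  refine ⟨k • indicator (pairCompl u v), nsmul_indicator_pairCompl_mem_edgeSums huv k,
    fun x => ?_⟩
  rw [nsmul_indicator_pairCompl_apply]
  by_cases hx : x = u ∨ x = v
  · simp [hx]
  · simpa [hx] using hm.le_of_isolated huv fun y => by rw [hadj]; tauto

theorem dominatesEdgeSums_of_edgeSet_eq_path3 {u c w : Fin n} (huw : u ≠ w)
    (hG : G.edgeSet = {s(u, c), s(c, w)}) (k : ℕ) : DominatesEdgeSums (complClutter G) k := by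
  have hadj {x y : Fin n} : G.Adj x y ↔ _ := adj_iff_of_edgeSet_eq hG
  simp only [Set.mem_insert_iff, Set.mem_singleton_iff, Sym2.eq_iff] at hadj
  have huc : G.Adj u c := hadj.2 (by tauto)
  have hcw : G.Adj c w := hadj.2 (by tauto)
  have := huc.ne
  have := hcw.ne
  intro m hm
  have h_uw := hm.le_add_of_not_adj huw (by rw [hadj]; tauto) huc hcw.symm
  obtain ⟨q₁, q₂, rfl, hq₁, hq₂⟩ : ∃ q₁ q₂, q₁ + q₂ = k ∧ q₁ ≤ m w ∧ q₂ ≤ m u :=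
    ⟨k - min (m u) k, min (m u) k, by omega, by omega, by omega⟩
  refine ⟨q₁ • indicator (pairCompl u c) + q₂ • indicator (pairCompl c w),
    add_mem_edgeSums (nsmul_indicator_pairCompl_mem_edgeSums huc q₁)
      (nsmul_indicator_pairCompl_mem_edgeSums hcw q₂), fun x => ?_⟩
  simp only [Finsupp.add_apply, nsmul_indicator_pairCompl_apply]
  obtain rfl | rfl | rfl | hx : x = u ∨ x = c ∨ x = w ∨ (x ≠ u ∧ x ≠ c ∧ x ≠ w) := by tauto
  · simp [huc.ne, huw, hq₂]
  · simp
  · simp [huw.symm, hcw.ne', hq₁]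
  · have := hm.le_of_isolated (x := x) huc fun y => by rw [hadj]; tauto
    simp only [hx, or_self, ↓reduceIte]
    omega

theorem dominatesEdgeSums_of_edgeSet_eq_two_disjoint {a b g d : Fin n} (hag : a ≠ g) (had : a ≠ d)
    (hbg : b ≠ g) (hbd : b ≠ d) (hG : G.edgeSet = {s(a, b), s(g, d)}) (k : ℕ) :
    DominatesEdgeSums (complClutter G) k := by
  have hadj {x y : Fin n} : G.Adj x y ↔ _ := adj_iff_of_edgeSet_eq hG
  simp only [Set.mem_insert_iff, Set.mem_singleton_iff, Sym2.eq_iff] at hadj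
  have hab : G.Adj a b := hadj.2 (by tauto)
  have hgd : G.Adj g d := hadj.2 (by tauto)
  have := hab.ne
  have := hgd.ne
  intro m hm
  have h_ag := hm.le_add_of_not_adj hag (by rw [hadj]; tauto) hab hgd
  have h_ad := hm.le_add_of_not_adj had (by rw [hadj]; tauto) hab hgd.symm
  have h_bg := hm.le_add_of_not_adj hbg (by rw [hadj]; tauto) hab.symm hgd
  have h_bd := hm.le_add_of_not_adj hbd (by rw [hadj]; tauto) hab.symm hgd.symm
  obtain ⟨q₁, q₂, rfl, hq₁g, hq₁d, hq₂a, hq₂b⟩ :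
      ∃ q₁ q₂, q₁ + q₂ = k ∧ q₁ ≤ m g ∧ q₁ ≤ m d ∧ q₂ ≤ m a ∧ q₂ ≤ m b :=
    ⟨k - min (min (m a) (m b)) k, min (min (m a) (m b)) k, by omega, by omega, by omega, by omega,
      by omega⟩
  refine ⟨q₁ • indicator (pairCompl a b) + q₂ • indicator (pairCompl g d),
    add_mem_edgeSums (nsmul_indicator_pairCompl_mem_edgeSums hab q₁)
      (nsmul_indicator_pairCompl_mem_edgeSums hgd q₂), fun x => ?_⟩
  simp only [Finsupp.add_apply, nsmul_indicator_pairCompl_apply]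
  obtain rfl | rfl | rfl | rfl | hx :
      x = a ∨ x = b ∨ x = g ∨ x = d ∨ (x ≠ a ∧ x ≠ b ∧ x ≠ g ∧ x ≠ d) := by tauto
  · simp [hag, had, hq₂a]
  · simp [hbg, hbd, hq₂b]
  · simp [hag.symm, hbg.symm, hq₁g]
  · simp [had.symm, hbd.symm, hq₁d]
  · have := hm.le_of_isolated (x := x) hab fun y => by rw [hadj]; tauto
    simp only [hx, or_self, ↓reduceIte]
    omega

theorem dominatesEdgeSums_of_edgeSet_eq_triangle {u v w : Fin n}
    (hG : G.edgeSet = {s(u, v), s(v, w), s(u, w)}) (k : ℕ) :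
    DominatesEdgeSums (complClutter G) k := by
  have hadj {x y : Fin n} : G.Adj x y ↔ _ := adj_iff_of_edgeSet_eq hG
  simp only [Set.mem_insert_iff, Set.mem_singleton_iff, Sym2.eq_iff] at hadj
  have huv : G.Adj u v := hadj.2 (by tauto)
  have hvw : G.Adj v w := hadj.2 (by tauto)
  have huw : G.Adj u w := hadj.2 (by tauto)
  intro m hm
  have h_uvw := hm.le_add_add_of_triangle huv hvw huw
  obtain ⟨qu, qv, qw, rfl, hqu, hqv, hqw⟩ :
      ∃ qu qv qw, qu + qv + qw = k ∧ qu ≤ m u ∧ qv ≤ m v ∧ qw ≤ m w :=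
    ⟨min (m u) k, min (m v) (k - min (m u) k), k - min (m u) k - min (m v) (k - min (m u) k),
      by omega, by omega, by omega, by omega⟩
  refine ⟨qu • indicator (pairCompl v w) + qv • indicator (pairCompl u w) +
      qw • indicator (pairCompl u v),
    add_mem_edgeSums (add_mem_edgeSums (nsmul_indicator_pairCompl_mem_edgeSums hvw qu)
      (nsmul_indicator_pairCompl_mem_edgeSums huw qv))
      (nsmul_indicator_pairCompl_mem_edgeSums huv qw), fun x => ?_⟩
  simp only [Finsupp.add_apply, nsmul_indicator_pairCompl_apply]
  obtain rfl | rfl | rfl | hx : x = u ∨ x = v ∨ x = w ∨ (x ≠ u ∧ x ≠ v ∧ x ≠ w) := by tauto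
  · simp [huv.ne, huw.ne, hqu]
  · simp [huv.ne', hvw.ne, hqv]
  · simp [huw.ne', hvw.ne', hqw]
  · have := hm.le_of_isolated (x := x) huv fun y => by rw [hadj]; tauto
    simp only [hx, or_self, ↓reduceIte]
    omega

theorem dominatesEdgeSums_of_edgeSet_eq_path4 {a b c d : Fin n} (hac : a ≠ c) (had : a ≠ d)
    (hbd : b ≠ d) (hG : G.edgeSet = {s(a, b), s(b, c), s(c, d)}) (k : ℕ) :
    DominatesEdgeSums (complClutter G) k := by
  have hadj {x y : Fin n} : G.Adj x y ↔ _ := adj_iff_of_edgeSet_eq hG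
  simp only [Set.mem_insert_iff, Set.mem_singleton_iff, Sym2.eq_iff] at hadj
  have hab : G.Adj a b := hadj.2 (by tauto)
  have hbc : G.Adj b c := hadj.2 (by tauto)
  have hcd : G.Adj c d := hadj.2 (by tauto)
  have := hab.ne
  have := hbc.ne
  have := hcd.ne
  intro m hm
  have h_ac := hm.le_add_of_not_adj hac (by rw [hadj]; tauto) hab hcd
  have h_ad := hm.le_add_of_not_adj had (by rw [hadj]; tauto) hab hcd.symm
  have h_bd := hm.le_add_of_not_adj hbd (by rw [hadj]; tauto) hab.symm hcd.symm
  obtain ⟨qab, qbc, qcd, rfl, ha, hb, hc, hd⟩ : ∃ qab qbc qcd, qab + qbc + qcd = k ∧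
      qbc + qcd ≤ m a ∧ qcd ≤ m b ∧ qab ≤ m c ∧ qab + qbc ≤ m d :=
    ⟨k - min (m a) k, min (m a) k - min (min (m a) k) (m b), min (min (m a) k) (m b),
      by omega, by omega, by omega, by omega, by omega⟩
  refine ⟨qab • indicator (pairCompl a b) + qbc • indicator (pairCompl b c) +
      qcd • indicator (pairCompl c d),
    add_mem_edgeSums (add_mem_edgeSums (nsmul_indicator_pairCompl_mem_edgeSums hab qab)
      (nsmul_indicator_pairCompl_mem_edgeSums hbc qbc))
      (nsmul_indicator_pairCompl_mem_edgeSums hcd qcd), fun x => ?_⟩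
  simp only [Finsupp.add_apply, nsmul_indicator_pairCompl_apply]
  obtain rfl | rfl | rfl | rfl | hx :
      x = a ∨ x = b ∨ x = c ∨ x = d ∨ (x ≠ a ∧ x ≠ b ∧ x ≠ c ∧ x ≠ d) := by tauto
  · simp [hab.ne, hac, had, ha]
  · simp [hab.ne', hbc.ne, hbd, hb]
  · simp [hac.symm, hbc.ne', hcd.ne, hc]
  · simp [had.symm, hbd.symm, hcd.ne', hd]
  · have := hm.le_of_isolated (x := x) hab fun y => by rw [hadj]; tauto
    simp only [hx, or_self, ↓reduceIte]
    omega

theorem dominatesEdgeSums_of_edgeSet_eq_cycle4 {a b c d : Fin n} (hac : a ≠ c) (hbd : b ≠ d)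
    (hG : G.edgeSet = {s(a, b), s(b, c), s(c, d), s(d, a)}) (k : ℕ) :
    DominatesEdgeSums (complClutter G) k := by
  have hadj {x y : Fin n} : G.Adj x y ↔ _ := adj_iff_of_edgeSet_eq hG
  simp only [Set.mem_insert_iff, Set.mem_singleton_iff, Sym2.eq_iff] at hadj
  have hab : G.Adj a b := hadj.2 (by tauto)
  have hbc : G.Adj b c := hadj.2 (by tauto)
  have hcd : G.Adj c d := hadj.2 (by tauto)
  have hda : G.Adj d a := hadj.2 (by tauto)
  have := hab.ne
  have := hbc.ne
  have := hcd.ne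
  have := hda.ne
  intro m hm
  have h_ac := hm.le_add_of_not_adj hac (by rw [hadj]; tauto) hab hcd
  have h_bd := hm.le_add_of_not_adj hbd (by rw [hadj]; tauto) hab.symm hcd.symm
  obtain ⟨qab, qbc, qcd, qda, rfl, ha, hb, hc, hd⟩ : ∃ qab qbc qcd qda, qab + qbc + qcd + qda = k ∧
      qbc + qcd ≤ m a ∧ qcd + qda ≤ m b ∧ qab + qda ≤ m c ∧ qab + qbc ≤ m d := by
    refine ⟨k - max (min (m a) k) (min (m b) k),
      min (m a) k - min (min (m a) k) (min (m b) k), min (min (m a) k) (min (m b) k),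
      min (m b) k - min (min (m a) k) (min (m b) k), ?_, ?_, ?_, ?_, ?_⟩ <;> omega
  refine ⟨qab • indicator (pairCompl a b) + qbc • indicator (pairCompl b c) +
      qcd • indicator (pairCompl c d) + qda • indicator (pairCompl d a),
    add_mem_edgeSums (add_mem_edgeSums (add_mem_edgeSums
      (nsmul_indicator_pairCompl_mem_edgeSums hab qab)
      (nsmul_indicator_pairCompl_mem_edgeSums hbc qbc))
      (nsmul_indicator_pairCompl_mem_edgeSums hcd qcd))
      (nsmul_indicator_pairCompl_mem_edgeSums hda qda), fun x => ?_⟩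
  simp only [Finsupp.add_apply, nsmul_indicator_pairCompl_apply]
  obtain rfl | rfl | rfl | rfl | hx :
      x = a ∨ x = b ∨ x = c ∨ x = d ∨ (x ≠ a ∧ x ≠ b ∧ x ≠ c ∧ x ≠ d) := by tauto
  · simp [hab.ne, hac, hda.ne', ha]
  · simp [hab.ne', hbc.ne, hbd, hb]
  · simp [hac.symm, hbc.ne', hcd.ne, hc]
  · simp [hbd.symm, hcd.ne', hda.ne, hd]
  · have := hm.le_of_isolated (x := x) hab fun y => by rw [hadj]; tauto
    simp only [hx, or_self, ↓reduceIte]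
    omega

end GoodGraphs

section Classification

variable {G : SimpleGraph (Fin n)}

lemma edgeSet_eq_of_forall_adj {S : Set (Fin n)} {L : Set (Sym2 (Fin n))} (hL : L ⊆ G.edgeSet)
    (hmeet : ∀ x y, G.Adj x y → x ∈ S ∨ y ∈ S) (hS : ∀ x ∈ S, ∀ y, G.Adj x y → s(x, y) ∈ L) :
    G.edgeSet = L := by
  refine Set.Subset.antisymm (fun e he => ?_) hL
  induction e using Sym2.ind with
  | _ x y =>
    rcases hmeet x y he with hx | hy
    · exact hS x hx y he
    · exact Sym2.eq_swap ▸ hS y hy x he.symm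

lemma eq_or_eq_of_not_hasThreeNeighbors (h₁ : ¬ HasThreeNeighbors G) {x y z t : Fin n}
    (hy : G.Adj x y) (hz : G.Adj x z) (ht : G.Adj x t) (hyz : y ≠ z) : t = y ∨ t = z := by
  by_contra! h
  exact h₁ ⟨x, y, z, t, hyz, h.1.symm, h.2.symm, hy, hz, ht⟩

lemma mem_or_mem_of_not_hasPathAndDisjointEdge (h₂ : ¬ HasPathAndDisjointEdge G) {u c w : Fin n}
    (huw : u ≠ w) (huc : G.Adj u c) (hcw : G.Adj c w) {p q : Fin n} (hpq : G.Adj p q) :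
    p ∈ ({u, c, w} : Set (Fin n)) ∨ q ∈ ({u, c, w} : Set (Fin n)) := by
  by_contra! h
  simp only [Set.mem_insert_iff, Set.mem_singleton_iff, not_or] at h
  exact h₂ ⟨u, c, w, p, q, huw, huc, hcw, hpq, h.1.1, h.1.2.1, h.1.2.2, h.2.1, h.2.2.1, h.2.2.2⟩

theorem dominatesEdgeSums_of_path_of_adj (h₁ : ¬ HasThreeNeighbors G)
    (h₂ : ¬ HasPathAndDisjointEdge G) {u c w x : Fin n} (huw : u ≠ w) (huc : G.Adj u c)
    (hcw : G.Adj c w) (hnuw : ¬ G.Adj u w) (hux : G.Adj u x) (hxc : x ≠ c) (k : ℕ) :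
    DominatesEdgeSums (complClutter G) k := by
  have hmeet := fun p q => mem_or_mem_of_not_hasPathAndDisjointEdge (p := p) (q := q) h₂ huw huc hcw
  have hxw : x ≠ w := fun h => hnuw (h ▸ hux)
  have hu : ∀ y, G.Adj u y → y = c ∨ y = x := fun y hy =>
    eq_or_eq_of_not_hasThreeNeighbors h₁ huc hux hy hxc.symm
  have hc : ∀ y, G.Adj c y → y = u ∨ y = w := fun y hy =>
    eq_or_eq_of_not_hasThreeNeighbors h₁ huc.symm hcw hy huw
  by_cases hy : ∃ y, G.Adj w y ∧ y ≠ c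
  · obtain ⟨y, hwy, hyc⟩ := hy
    have hw : ∀ z, G.Adj w z → z = c ∨ z = y := fun z hz =>
      eq_or_eq_of_not_hasThreeNeighbors h₁ hcw.symm hwy hz hyc.symm
    obtain rfl | hxy := eq_or_ne x y
    · refine dominatesEdgeSums_of_edgeSet_eq_cycle4 (a := u) (b := c) (c := w) (d := x) huw
        hxc.symm (edgeSet_eq_of_forall_adj ?_ hmeet ?_) k
      · simp [Set.insert_subset_iff, huc, hcw, hwy, hux.symm]
      · simp only [Set.forall_mem_insert, Set.mem_singleton_iff, forall_eq]
        refine ⟨fun z hz => ?_, fun z hz => ?_, fun z hz => ?_⟩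
        · rcases hu z hz with rfl | rfl <;> simp
        · rcases hc z hz with rfl | rfl <;> simp
        · rcases hw z hz with rfl | rfl <;> simp
    · have hyu : y ≠ u := fun h => hnuw (h ▸ hwy.symm)
      exact absurd ⟨x, u, c, w, y, hxc, hux.symm, huc, hwy, hxw.symm, huw.symm, hcw.ne',
        hxy.symm, hyu, hyc⟩ h₂
  · push Not at hy
    refine dominatesEdgeSums_of_edgeSet_eq_path4 (a := x) (b := u) (c := c) (d := w) hxc hxw
      huw (edgeSet_eq_of_forall_adj ?_ hmeet ?_) k
    · simp [Set.insert_subset_iff, huc, hcw, hux.symm]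
    · simp only [Set.forall_mem_insert, Set.mem_singleton_iff, forall_eq]
      refine ⟨fun z hz => ?_, fun z hz => ?_, fun z hz => ?_⟩
      · rcases hu z hz with rfl | rfl <;> simp
      · rcases hc z hz with rfl | rfl <;> simp
      · simp [hy z hz]

theorem dominatesEdgeSums_of_path (h₁ : ¬ HasThreeNeighbors G) (h₂ : ¬ HasPathAndDisjointEdge G)
    {u c w : Fin n} (huw : u ≠ w) (huc : G.Adj u c) (hcw : G.Adj c w) (k : ℕ) :
    DominatesEdgeSums (complClutter G) k := by
  have hmeet := fun p q => mem_or_mem_of_not_hasPathAndDisjointEdge (p := p) (q := q) h₂ huw huc hcw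
  have hc : ∀ y, G.Adj c y → y = u ∨ y = w := fun y hy =>
    eq_or_eq_of_not_hasThreeNeighbors h₁ huc.symm hcw hy huw
  by_cases hnuw : G.Adj u w
  · have hu : ∀ y, G.Adj u y → y = c ∨ y = w := fun y hy =>
      eq_or_eq_of_not_hasThreeNeighbors h₁ huc hnuw hy hcw.ne
    have hw : ∀ y, G.Adj w y → y = c ∨ y = u := fun y hy =>
      eq_or_eq_of_not_hasThreeNeighbors h₁ hcw.symm hnuw.symm hy huc.ne'
    refine dominatesEdgeSums_of_edgeSet_eq_triangle (u := u) (v := c) (w := w)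
      (edgeSet_eq_of_forall_adj ?_ hmeet ?_) k
    · simp [Set.insert_subset_iff, huc, hcw, hnuw]
    · simp only [Set.forall_mem_insert, Set.mem_singleton_iff, forall_eq]
      refine ⟨fun z hz => ?_, fun z hz => ?_, fun z hz => ?_⟩
      · rcases hu z hz with rfl | rfl <;> simp
      · rcases hc z hz with rfl | rfl <;> simp
      · rcases hw z hz with rfl | rfl <;> simp
  by_cases hx : ∃ x, G.Adj u x ∧ x ≠ c
  · obtain ⟨x, hux, hxc⟩ := hx
    exact dominatesEdgeSums_of_path_of_adj h₁ h₂ huw huc hcw hnuw hux hxc k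
  by_cases hy : ∃ y, G.Adj w y ∧ y ≠ c
  · obtain ⟨y, hwy, hyc⟩ := hy
    exact dominatesEdgeSums_of_path_of_adj h₁ h₂ huw.symm hcw.symm huc.symm
      (fun h => hnuw h.symm) hwy hyc k
  push Not at hx hy
  refine dominatesEdgeSums_of_edgeSet_eq_path3 (c := c) huw
    (edgeSet_eq_of_forall_adj ?_ hmeet ?_) k
  · simp [Set.insert_subset_iff, huc, hcw]
  · simp only [Set.forall_mem_insert, Set.mem_singleton_iff, forall_eq]
    refine ⟨fun z hz => ?_, fun z hz => ?_, fun z hz => ?_⟩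
    · simp [hx z hz]
    · rcases hc z hz with rfl | rfl <;> simp
    · simp [hy z hz]

theorem dominatesEdgeSums_of_degree_le_one (h₃ : ¬ HasIndepTriple G)
    (hdeg : ∀ x y z, G.Adj x y → G.Adj x z → y = z) {a b : Fin n} (hab : G.Adj a b) (k : ℕ) :
    DominatesEdgeSums (complClutter G) k := by
  by_cases h2 : ∃ g d, G.Adj g d ∧ g ≠ a ∧ g ≠ b
  · obtain ⟨g, d, hgd, hga, hgb⟩ := h2
    have hda : d ≠ a := fun h => hgb (hdeg a g b (h ▸ hgd.symm) hab)
    have hdb : d ≠ b := fun h => hga (hdeg b g a (h ▸ hgd.symm) hab.symm)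
    by_cases h3 : ∃ p q, G.Adj p q ∧ p ≠ a ∧ p ≠ b ∧ p ≠ g ∧ p ≠ d
    · obtain ⟨p, q, hpq, hpa, hpb, hpg, hpd⟩ := h3
      exact absurd ⟨a, g, p, b, d, q, hga.symm, hpa.symm, hpg.symm,
        fun h => hgb (hdeg a g b h hab), fun h => hpb (hdeg a p b h hab),
        fun h => hpd (hdeg g p d h hgd), hab, hgd, hpq⟩ h₃
    push Not at h3
    refine dominatesEdgeSums_of_edgeSet_eq_two_disjoint hga.symm hda.symm hgb.symm hdb.symm
      (edgeSet_eq_of_forall_adj (S := {a, b, g, d}) ?_ (fun p q hpq => Or.inl ?_) ?_) k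
    · simp [Set.insert_subset_iff, hab, hgd]
    · have := h3 p q hpq
      simp only [Set.mem_insert_iff, Set.mem_singleton_iff]
      tauto
    · simp only [Set.forall_mem_insert, Set.mem_singleton_iff, forall_eq]
      refine ⟨fun z hz => ?_, fun z hz => ?_, fun z hz => ?_, fun z hz => ?_⟩
      · simp [hdeg _ _ _ hz hab]
      · simp [hdeg _ _ _ hz hab.symm]
      · simp [hdeg _ _ _ hz hgd]
      · simp [hdeg _ _ _ hz hgd.symm]
  push Not at h2
  refine dominatesEdgeSums_of_edgeSet_eq_single (u := a) (v := b)
    (edgeSet_eq_of_forall_adj (S := {a, b}) ?_ (fun p q hpq => Or.inl ?_) ?_) k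
  · simp [hab]
  · have := h2 p q hpq
    simp only [Set.mem_insert_iff, Set.mem_singleton_iff]
    tauto
  · simp only [Set.forall_mem_insert, Set.mem_singleton_iff, forall_eq]
    exact ⟨fun y hy => by simp [hdeg _ _ _ hy hab], fun y hy => by simp [hdeg _ _ _ hy hab.symm]⟩

theorem dominatesEdgeSums_of_no_bad_subgraph (h₁ : ¬ HasThreeNeighbors G)
    (h₂ : ¬ HasPathAndDisjointEdge G) (h₃ : ¬ HasIndepTriple G) {k : ℕ} (hk : k ≠ 0) :
    DominatesEdgeSums (complClutter G) k := by
  by_cases hpath : ∃ u c w, u ≠ w ∧ G.Adj u c ∧ G.Adj c w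
  · obtain ⟨u, c, w, huw, huc, hcw⟩ := hpath
    exact dominatesEdgeSums_of_path h₁ h₂ huw huc hcw k
  by_cases hedge : ∃ a b, G.Adj a b
  · obtain ⟨a, b, hab⟩ := hedge
    refine dominatesEdgeSums_of_degree_le_one h₃ (fun x y z hxy hxz => ?_) hab k
    by_contra hyz
    exact hpath ⟨y, x, z, hyz, hxy.symm, hxz⟩
  push Not at hedge
  exact dominatesEdgeSums_of_forall_not_adj hedge hk

end Classification

end Clutter

/-- If `H` is an `(n-2)`-uniform clutter on `n` vertices with `I(H)^(k₀) = I(H)^{k₀}` for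
some `k₀ ≥ 2`, then `I(H)^(k) = I(H)^k` for all `k ≥ 1`. -/
theorem stmt16 {n : ℕ} (K : Type*) [Field K] (E : Set (Finset (Fin n)))
    (hunif : ∀ e ∈ E, e.card = n - 2)
    (k₀ : ℕ) (hk₀ : 2 ≤ k₀)
    (h : symbPow (clutterIdeal K E) k₀ = clutterIdeal K E ^ k₀) :
    ∀ k : ℕ, 1 ≤ k → symbPow (clutterIdeal K E) k = clutterIdeal K E ^ k := by
  open Clutter in
  intro k hk
  by_cases h0 : ∅ ∈ E
  · exact symbPow_eq_pow_of_dominatesEdgeSums (dominatesEdgeSums_of_empty_mem h0 k)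
  obtain ⟨G, rfl⟩ := exists_eq_complClutter hunif h0
  refine symbPow_eq_pow_of_dominatesEdgeSums
    (dominatesEdgeSums_of_no_bad_subgraph ?_ ?_ ?_ (Nat.one_le_iff_ne_zero.1 hk))
  · exact fun hG => symbPow_ne_pow_of_hasThreeNeighbors hG hk₀ h
  · exact fun hG => symbPow_ne_pow_of_hasPathAndDisjointEdge hG hk₀ h
  · exact fun hG => symbPow_ne_pow_of_hasIndepTriple hG hk₀ h
end
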